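/- arXiv:2508.04798 — 10 statements merged into one kernel-verified Lean document; each statement's English description precedes it below -/
import Mathlib

section
/- Let (E, f) be a polymatroid. Then the collection I_f := {F ⊆ E : |I| ≤ f(I) for all I ⊆ F} is the family of independent sets of a matroid on E, and the rank function of this matroid is r_f(F) = min{|F ∖ I| + f(I) : I ⊆ F} for every F ⊆ E. -/
/-!
The independence axioms reduce to one fact. If `J ⊆ F` is independent and maximal in `F`,
then each `e ∈ F \ J` lies in a set `A ⊆ insert e J` with `f A < |A|`, which is *tight*:
`f A = |A ∩ J|`. The slack `S ↦ f S - |S ∩ J|` is nonnegative and submodular, so tight sets are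
closed under unions, and the union `I` of these sets is a tight set containing `F \ J`. Hence
`|F \ I| + f I ≤ |J \ I| + |J ∩ I| = |J|`, while `|J'| ≤ |F \ I| + f I` for every independent
`J' ⊆ F`. This gives augmentation (taking `F = I ∪ J`) as well as the rank formula.
-/

open Finset

theorem Finset.sup_nonpos_of_submodular {ι β : Type*} [Lattice β] [OrderBot β] {g : β → ℤ}
    (hsub : ∀ X Y, g (X ⊔ Y) + g (X ⊓ Y) ≤ g X + g Y) (hnonneg : ∀ X, 0 ≤ g X) (hbot : g ⊥ ≤ 0)
    {s : Finset ι} {A : ι → β} (hA : ∀ i ∈ s, g (A i) ≤ 0) : g (s.sup A) ≤ 0 := by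
  refine Finset.sup_induction (p := fun X => g X ≤ 0) hbot (fun X hX Y hY => ?_) hA
  linarith [hsub X Y, hnonneg (X ⊓ Y)]

namespace Polymatroid

variable {α : Type*} {f : Finset α → ℤ} {F I J : Finset α}

def Indep (f : Finset α → ℤ) (F : Finset α) : Prop :=
  ∀ I ⊆ F, (I.card : ℤ) ≤ f I

theorem indep_empty (hempty : f ∅ = 0) : Indep f ∅ := by
  intro I hI
  simp [subset_empty.1 hI, hempty]

theorem Indep.subset (hJ : Indep f J) (hIJ : I ⊆ J) : Indep f I :=
  fun K hK => hJ K (hK.trans hIJ)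

variable [DecidableEq α]

theorem Indep.card_le_card_sdiff_add (hmono : Monotone f)
    (hJ : Indep f J) (hJF : J ⊆ F) (I : Finset α) : (J.card : ℤ) ≤ (F \ I).card + f I := by
  have hsplit := card_sdiff_add_card_inter J I
  have hout : (J \ I).card ≤ (F \ I).card := card_le_card (sdiff_subset_sdiff hJF le_rfl)
  have hin : ((J ∩ I).card : ℤ) ≤ f I :=
    (hJ _ inter_subset_left).trans (hmono inter_subset_right)
  omega

def slack (f : Finset α → ℤ) (J S : Finset α) : ℤ :=
  f S - (S ∩ J).card

theorem Indep.slack_nonneg (hmono : Monotone f) (hJ : Indep f J)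
    (S : Finset α) : 0 ≤ slack f J S := by
  have := (hJ _ inter_subset_right).trans (hmono (inter_subset_left : S ∩ J ⊆ S))
  unfold slack
  omega

theorem slack_submodular (hsub : ∀ X Y : Finset α, f (X ∪ Y) + f (X ∩ Y) ≤ f X + f Y)
    (J X Y : Finset α) : slack f J (X ∪ Y) + slack f J (X ∩ Y) ≤ slack f J X + slack f J Y := by
  have hmod : ((X ∪ Y) ∩ J).card + ((X ∩ Y) ∩ J).card = (X ∩ J).card + (Y ∩ J).card := by
    rw [union_inter_distrib_right, inter_inter_distrib_right]
    exact card_union_add_card_inter _ _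
  have := hsub X Y
  unfold slack
  omega

theorem Indep.exists_tight_of_not_indep_insert (hJ : Indep f J) {e : α} (he : e ∉ J)
    (hdep : ¬ Indep f (insert e J)) : ∃ A ⊆ insert e J, e ∈ A ∧ slack f J A ≤ 0 := by
  obtain ⟨A, hAeJ, hA⟩ : ∃ A ⊆ insert e J, f A < A.card := by
    simpa [Indep] using hdep
  have heA : e ∈ A := by
    by_contra heA
    exact (hA.trans_le' (hJ A ((subset_insert_iff_of_notMem heA).1 hAeJ))).false
  have hcard : A.card ≤ (A ∩ J).card + 1 := by
    calc A.card ≤ (insert e (A ∩ J)).card := card_le_card fun x hx => by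
          rcases mem_insert.1 (hAeJ hx) with rfl | hxJ
          · exact mem_insert_self _ _
          · exact mem_insert_of_mem (mem_inter.2 ⟨hx, hxJ⟩)
      _ ≤ (A ∩ J).card + 1 := card_insert_le _ _
  refine ⟨A, hAeJ, heA, ?_⟩
  unfold slack
  omega

theorem Indep.exists_card_sdiff_add_le
    (hsub : ∀ X Y : Finset α, f (X ∪ Y) + f (X ∩ Y) ≤ f X + f Y)
    (hmono : Monotone f) (hempty : f ∅ = 0)
    (hJ : Indep f J) (hJF : J ⊆ F) (hmax : ∀ e ∈ F \ J, ¬ Indep f (insert e J)) :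
    ∃ I ⊆ F, ((F \ I).card : ℤ) + f I ≤ J.card := by
  have htight : ∀ e ∈ F \ J, ∃ A ⊆ insert e J, e ∈ A ∧ slack f J A ≤ 0 := fun e he =>
    hJ.exists_tight_of_not_indep_insert (mem_sdiff.1 he).2 (hmax e he)
  choose! A hAeJ heA hA using htight
  set I := (F \ J).sup A
  have hIF : I ⊆ F := Finset.sup_le fun e he =>
    (hAeJ e he).trans (insert_subset (mem_sdiff.1 he).1 hJF)
  have hI : slack f J I ≤ 0 :=
    Finset.sup_nonpos_of_submodular (slack_submodular hsub J) (hJ.slack_nonneg hmono)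
      (by simp [slack, hempty]) hA
  have hFI : F \ I ⊆ J \ I := fun x hx => by
    obtain ⟨hxF, hxI⟩ := mem_sdiff.1 hx
    refine mem_sdiff.2 ⟨by_contra fun hxJ => hxI ?_, hxI⟩
    exact mem_sup.2 ⟨x, mem_sdiff.2 ⟨hxF, hxJ⟩, heA x (mem_sdiff.2 ⟨hxF, hxJ⟩)⟩
  refine ⟨I, hIF, ?_⟩
  have hout := card_le_card hFI
  have hsplit := card_sdiff_add_card_inter J I
  rw [slack, inter_comm] at hI
  omega

theorem Indep.exists_insert_of_card_lt
    (hsub : ∀ X Y : Finset α, f (X ∪ Y) + f (X ∩ Y) ≤ f X + f Y)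
    (hmono : Monotone f) (hempty : f ∅ = 0)
    (hI : Indep f I) (hJ : Indep f J) (hlt : I.card < J.card) :
    ∃ e ∈ J, e ∉ I ∧ Indep f (insert e I) := by
  by_contra! hcon
  have hmax : ∀ e ∈ (I ∪ J) \ I, ¬ Indep f (insert e I) := fun e he => by
    obtain ⟨heIJ, heI⟩ := mem_sdiff.1 he
    exact hcon e ((mem_union.1 heIJ).resolve_left heI) heI
  obtain ⟨K, -, hK⟩ := hI.exists_card_sdiff_add_le hsub hmono hempty subset_union_left hmax
  have := hJ.card_le_card_sdiff_add hmono (subset_union_right (s₁ := I)) K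
  omega

variable (f) in
def matroid (hsub : ∀ X Y : Finset α, f (X ∪ Y) + f (X ∩ Y) ≤ f X + f Y)
    (hmono : Monotone f) (hempty : f ∅ = 0) : Matroid α :=
  (IndepMatroid.ofFinset Set.univ (Indep f) (indep_empty hempty)
    (fun _ _ hJ hIJ => hJ.subset hIJ)
    (fun _ _ hI hJ hlt => hI.exists_insert_of_card_lt hsub hmono hempty hJ hlt)
    (fun _ _ => Set.subset_univ _)).matroid

theorem matroid_indep_iff {hsub hmono hempty} :
    (matroid f hsub hmono hempty).Indep ↑F ↔ Indep f F := by
  simp [matroid]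

theorem exists_indep_isLeast (hsub : ∀ X Y : Finset α, f (X ∪ Y) + f (X ∩ Y) ≤ f X + f Y)
    (hmono : Monotone f) (hempty : f ∅ = 0) (F : Finset α) :
    ∃ J ⊆ F, Indep f J ∧
      IsLeast {s : ℤ | ∃ I ⊆ F, s = ((F \ I).card : ℤ) + f I} J.card := by
  classical
  obtain ⟨J, hJ⟩ := (F.powerset.filter (Indep f)).exists_maximal
    ⟨∅, mem_filter.2 ⟨empty_mem_powerset F, indep_empty hempty⟩⟩
  obtain ⟨hJF, hJind⟩ : J ⊆ F ∧ Indep f J := by simpa using hJ.prop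
  have hmax : ∀ e ∈ F \ J, ¬ Indep f (insert e J) := fun e he hind => by
    obtain ⟨heF, heJ⟩ := mem_sdiff.1 he
    have hle := hJ.2 (by simpa using ⟨insert_subset heF hJF, hind⟩) (subset_insert e J)
    exact heJ (hle (mem_insert_self e J))
  obtain ⟨I, hIF, hI⟩ := hJind.exists_card_sdiff_add_le hsub hmono hempty hJF hmax
  refine ⟨J, hJF, hJind, ⟨I, hIF, ?_⟩, ?_⟩
  · exact le_antisymm (hJind.card_le_card_sdiff_add hmono hJF I) hI
  · rintro s ⟨I', -, rfl⟩
    exact hJind.card_le_card_sdiff_add hmono hJF I'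

end Polymatroid

open Polymatroid in
theorem stmt0_general {α : Type*} [DecidableEq α] (f : Finset α → ℤ)
    (hsub : ∀ X Y : Finset α, f (X ∪ Y) + f (X ∩ Y) ≤ f X + f Y)
    (hmono : ∀ X Y : Finset α, X ⊆ Y → f X ≤ f Y)
    (hempty : f ∅ = 0) :
    ∃ M : Matroid α, M.E = Set.univ ∧
      (∀ F : Finset α, M.Indep ↑F ↔ ∀ I ⊆ F, (I.card : ℤ) ≤ f I) ∧
      (∀ F : Finset α,
        (∃ J ⊆ F, M.Indep ↑J ∧
            (J.card : ℤ) = sInf {s : ℤ | ∃ I ⊆ F, s = ((F \ I).card : ℤ) + f I}) ∧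
        (∀ J ⊆ F, M.Indep ↑J →
            (J.card : ℤ) ≤ sInf {s : ℤ | ∃ I ⊆ F, s = ((F \ I).card : ℤ) + f I})) := by
  refine ⟨matroid f hsub hmono hempty, rfl, fun F => matroid_indep_iff, fun F => ?_⟩
  obtain ⟨J, hJF, hJ, hleast⟩ := exists_indep_isLeast hsub hmono hempty F
  rw [hleast.csInf_eq]
  refine ⟨⟨J, hJF, matroid_indep_iff.2 hJ, rfl⟩, fun J' hJ'F hJ' => ?_⟩
  obtain ⟨I, -, hI⟩ := hleast.1
  exact hI ▸ (matroid_indep_iff.1 hJ').card_le_card_sdiff_add hmono hJ'F I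

/-- Let `(E, f)` be a polymatroid (here the ground set `E` is the whole
finite type `α`).  Then `{F ⊆ E : |I| ≤ f(I) for all I ⊆ F}` is the family of independent
sets of a matroid on `E`, and the rank of any `F` in this matroid (the maximum cardinality
of an independent subset of `F`) equals `min {|F \ I| + f(I) : I ⊆ F}`. -/
theorem stmt0 {α : Type*} [Fintype α] [DecidableEq α] (f : Finset α → ℤ)
    (hsub : ∀ X Y : Finset α, f (X ∪ Y) + f (X ∩ Y) ≤ f X + f Y)
    (hmono : ∀ X Y : Finset α, X ⊆ Y → f X ≤ f Y)
    (hempty : f ∅ = 0) :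
    ∃ M : Matroid α, M.E = Set.univ ∧
      (∀ F : Finset α, M.Indep ↑F ↔ ∀ I ⊆ F, (I.card : ℤ) ≤ f I) ∧
      (∀ F : Finset α,
        (∃ J ⊆ F, M.Indep ↑J ∧
            (J.card : ℤ) = sInf {s : ℤ | ∃ I ⊆ F, s = ((F \ I).card : ℤ) + f I}) ∧
        (∀ J ⊆ F, M.Indep ↑J →
            (J.card : ℤ) ≤ sInf {s : ℤ | ∃ I ⊆ F, s = ((F \ I).card : ℤ) + f I})) :=
  stmt0_general f hsub hmono hempty
end

section
/- Let E be a finite set and f : 2^E → ℤ a set function that is monotone, submodular, and satisfies f(I) ≥ 0 for every nonempty I ⊆ E. Then its Dilworth truncation f^D is monotone and submodular, and hence (E, f^D) is a polymatroid. -/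
/-!
Minimal partitions exist because `f` is non-negative on nonempty sets, and `f^D` is subadditive
on disjoint sets. Monotonicity follows by restricting an optimal partition of `Y` to `X ⊆ Y`.

For submodularity, first let `Y = A` be a single nonempty set and `P` an optimal partition of `X`.
Merging `A` with the parts of `P` it meets gives a partition of `X ∪ A`, and the traces of those
parts on `A` partition `X ∩ A`. Applying submodularity of `f` once per merged part (they are
disjoint, so `(A ∪ S₁ ∪ ⋯ ∪ Sₖ) ∩ Sₖ₊₁ = A ∩ Sₖ₊₁`) gives
`f^D(X ∪ A) + f^D(X ∩ A) ≤ f^D(X) + f(A)`. For general `Y`, add the parts of an optimal partition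
of `Y` one at a time, using subadditivity of `f^D` to split the intersection.
-/

/-- `P` is a partition of the finite set `F` into nonempty parts. -/
def IsPartitionOf {α : Type*} [DecidableEq α] (P : Finset (Finset α)) (F : Finset α) : Prop :=
  (∀ S ∈ P, S.Nonempty) ∧ (∀ S ∈ P, ∀ T ∈ P, S ≠ T → Disjoint S T) ∧ P.sup id = F

/-- The Dilworth truncation `f^D` of a set function `f`. -/
noncomputable def dilworth {α : Type*} [DecidableEq α] (f : Finset α → ℤ) (F : Finset α) : ℤ :=
  if F = ∅ then 0
  else sInf {s : ℤ | ∃ P : Finset (Finset α), IsPartitionOf P F ∧ s = ∑ S ∈ P, f S}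


section

open Finset

variable {α : Type*} [DecidableEq α] {f : Finset α → ℤ}

namespace IsPartitionOf

variable {P : Finset (Finset α)} {F : Finset α}

lemma pairwiseDisjoint (hP : IsPartitionOf P F) : (P : Set (Finset α)).PairwiseDisjoint id :=
  fun S hS T hT hST => hP.2.1 S hS T hT hST

lemma biUnion_eq (hP : IsPartitionOf P F) : P.biUnion id = F := by
  rw [← sup_eq_biUnion, hP.2.2]

lemma biUnion_filter_union_biUnion_filter_not (hP : IsPartitionOf P F) (p : Finset α → Prop)
    [DecidablePred p] : (P.filter p).biUnion id ∪ (P.filter (¬p ·)).biUnion id = F := by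
  rw [← union_biUnion, filter_union_filter_not_eq, hP.biUnion_eq]

lemma disjoint_biUnion_filter_biUnion_filter_not (hP : IsPartitionOf P F)
    (p : Finset α → Prop) [DecidablePred p] :
    Disjoint ((P.filter p).biUnion id) ((P.filter (¬p ·)).biUnion id) := by
  simp only [disjoint_biUnion_left, disjoint_biUnion_right, mem_filter]
  rintro U ⟨hU, hpU⟩ V ⟨hV, hpV⟩
  exact hP.pairwiseDisjoint hV hU (by rintro rfl; contradiction)

end IsPartitionOf

lemma isPartitionOf_image {ι : Type*} {s : Finset ι} {S : ι → Finset α}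
    (hne : ∀ i ∈ s, (S i).Nonempty) (hdisj : (s : Set ι).PairwiseDisjoint S) :
    IsPartitionOf (s.image S) (s.biUnion S) := by
  refine ⟨?_, ?_, ?_⟩
  · simp only [mem_image, forall_exists_index, and_imp]
    rintro _ i hi rfl
    exact hne i hi
  · simp only [mem_image, forall_exists_index, and_imp]
    rintro _ i hi rfl _ j hj rfl hij
    exact hdisj hi hj fun h => hij (h ▸ rfl)
  · rw [sup_eq_biUnion, image_biUnion]
    rfl

lemma sum_nonneg_of_isPartitionOf (hnonneg : ∀ I : Finset α, I.Nonempty → 0 ≤ f I)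
    {P : Finset (Finset α)} {F : Finset α} (hP : IsPartitionOf P F) : 0 ≤ ∑ S ∈ P, f S :=
  sum_nonneg fun S hS => hnonneg S (hP.1 S hS)

lemma bddBelow_partition_sums (hnonneg : ∀ I : Finset α, I.Nonempty → 0 ≤ f I) (F : Finset α) :
    BddBelow {s : ℤ | ∃ P : Finset (Finset α), IsPartitionOf P F ∧ s = ∑ S ∈ P, f S} := by
  refine ⟨0, ?_⟩
  rintro s ⟨P, hP, rfl⟩
  exact sum_nonneg_of_isPartitionOf hnonneg hP

lemma dilworth_empty (f : Finset α → ℤ) : dilworth f ∅ = 0 := if_pos rfl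

lemma dilworth_le_sum_of_isPartitionOf (hnonneg : ∀ I : Finset α, I.Nonempty → 0 ≤ f I)
    {P : Finset (Finset α)} {F : Finset α} (hP : IsPartitionOf P F) :
    dilworth f F ≤ ∑ S ∈ P, f S := by
  by_cases hF : F = ∅
  · rw [hF, dilworth_empty]
    exact sum_nonneg_of_isPartitionOf hnonneg hP
  · rw [dilworth, if_neg hF]
    exact csInf_le (bddBelow_partition_sums hnonneg F) ⟨P, hP, rfl⟩

lemma dilworth_biUnion_le_sum (hnonneg : ∀ I : Finset α, I.Nonempty → 0 ≤ f I)
    {ι : Type*} {s : Finset ι} {S : ι → Finset α}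
    (hne : ∀ i ∈ s, (S i).Nonempty) (hdisj : (s : Set ι).PairwiseDisjoint S) :
    dilworth f (s.biUnion S) ≤ ∑ i ∈ s, f (S i) := by
  have hinj : Set.InjOn S s := fun i hi j hj hij =>
    let ⟨a, ha⟩ := hne i hi
    hdisj.elim_finset hi hj a ha (hij ▸ ha)
  rw [← sum_image hinj]
  exact dilworth_le_sum_of_isPartitionOf hnonneg (isPartitionOf_image hne hdisj)

lemma dilworth_le_apply (hnonneg : ∀ I : Finset α, I.Nonempty → 0 ≤ f I) {F : Finset α}
    (hF : F.Nonempty) : dilworth f F ≤ f F := by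
  simpa using dilworth_biUnion_le_sum hnonneg (s := {F}) (S := id) (by simpa using hF) (by simp)

lemma exists_isPartitionOf_dilworth_eq (hnonneg : ∀ I : Finset α, I.Nonempty → 0 ≤ f I)
    (F : Finset α) : ∃ P, IsPartitionOf P F ∧ dilworth f F = ∑ S ∈ P, f S := by
  rcases F.eq_empty_or_nonempty with rfl | hF
  · exact ⟨∅, by simp [IsPartitionOf], by rw [dilworth_empty, sum_empty]⟩
  · have hsingleton : IsPartitionOf {F} F := by
      simpa using isPartitionOf_image (s := {F}) (S := id) (by simpa using hF) (by simp)
    obtain ⟨P, hP, hmin⟩ :=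
      Int.csInf_mem (by exact ⟨_, {F}, hsingleton, rfl⟩) (bddBelow_partition_sums hnonneg F)
    exact ⟨P, hP, by rw [dilworth, if_neg hF.ne_empty, hmin]⟩

lemma dilworth_union_le (hnonneg : ∀ I : Finset α, I.Nonempty → 0 ≤ f I) {U V : Finset α}
    (hUV : Disjoint U V) : dilworth f (U ∪ V) ≤ dilworth f U + dilworth f V := by
  obtain ⟨P, hP, hPU⟩ := exists_isPartitionOf_dilworth_eq hnonneg U
  obtain ⟨Q, hQ, hQV⟩ := exists_isPartitionOf_dilworth_eq hnonneg V
  have hpart : ∀ ⦃S⦄, S ∈ P → ∀ ⦃T⦄, T ∈ Q → Disjoint S T := fun S hS T hT =>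
    (hUV.mono_left (hP.biUnion_eq ▸ subset_biUnion_of_mem id hS)).mono_right
      (hQ.biUnion_eq ▸ subset_biUnion_of_mem id hT)
  have hPQ : Disjoint P Q := disjoint_left.2 fun S hS hSQ =>
    (hP.1 S hS).ne_empty (disjoint_self.1 (hpart hS hSQ))
  have hdisj : ((P ∪ Q : Finset (Finset α)) : Set (Finset α)).PairwiseDisjoint id := by
    rw [coe_union, Set.pairwiseDisjoint_union]
    exact ⟨hP.pairwiseDisjoint, hQ.pairwiseDisjoint, fun S hS T hT _ => hpart hS hT⟩
  calc dilworth f (U ∪ V) = dilworth f ((P ∪ Q).biUnion id) := by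
        rw [union_biUnion, hP.biUnion_eq, hQ.biUnion_eq]
    _ ≤ ∑ S ∈ P ∪ Q, f S := by
        refine dilworth_biUnion_le_sum hnonneg (fun S hS => ?_) hdisj
        rcases mem_union.1 hS with hS | hS
        exacts [hP.1 S hS, hQ.1 S hS]
    _ = dilworth f U + dilworth f V := by rw [sum_union hPQ, hPU, hQV]

lemma dilworth_mono (hmono : ∀ X Y : Finset α, X ⊆ Y → f X ≤ f Y)
    (hnonneg : ∀ I : Finset α, I.Nonempty → 0 ≤ f I) {X Y : Finset α} (hXY : X ⊆ Y) :
    dilworth f X ≤ dilworth f Y := by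
  obtain ⟨Q, hQ, hQY⟩ := exists_isPartitionOf_dilworth_eq hnonneg Y
  set Q' := Q.filter fun S => (S ∩ X).Nonempty
  have hX : Q'.biUnion (· ∩ X) = X := by
    ext x
    simp only [Q', mem_biUnion, mem_filter, mem_inter]
    refine ⟨fun ⟨_, _, _, hx⟩ => hx, fun hx => ?_⟩
    obtain ⟨S, hS, hxS⟩ := mem_biUnion.1 (hQ.biUnion_eq ▸ hXY hx)
    exact ⟨S, ⟨hS, x, mem_inter.2 ⟨hxS, hx⟩⟩, hxS, hx⟩
  calc dilworth f X = dilworth f (Q'.biUnion (· ∩ X)) := by rw [hX]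
    _ ≤ ∑ S ∈ Q', f (S ∩ X) :=
        dilworth_biUnion_le_sum hnonneg (fun S hS => (mem_filter.1 hS).2)
          ((hQ.pairwiseDisjoint.subset (coe_subset.2 (filter_subset _ Q))).mono
            fun _ => inter_subset_left)
    _ ≤ ∑ S ∈ Q', f S := sum_le_sum fun S _ => hmono _ _ inter_subset_left
    _ ≤ ∑ S ∈ Q, f S := sum_le_sum_of_subset_of_nonneg (filter_subset _ Q)
        fun S hS _ => hnonneg S (hQ.1 S hS)
    _ = dilworth f Y := hQY.symm

lemma submodular_union_biUnion_le (hsub : ∀ X Y : Finset α, f (X ∪ Y) + f (X ∩ Y) ≤ f X + f Y)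
    {ι : Type*} [DecidableEq ι] (A : Finset α) (s : Finset ι) {S : ι → Finset α}
    (hdisj : (s : Set ι).PairwiseDisjoint S) :
    f (A ∪ s.biUnion S) + ∑ i ∈ s, f (S i ∩ A) ≤ f A + ∑ i ∈ s, f (S i) := by
  induction s using Finset.induction_on with
  | empty => simp
  | insert j s hj ih =>
    have hdisj' : Disjoint (s.biUnion S) (S j) := (disjoint_biUnion_left _ _ _).2
      fun i hi => hdisj (mem_insert_of_mem hi) (mem_insert_self j s)
        (ne_of_mem_of_not_mem hi hj)
    have hinter : (A ∪ s.biUnion S) ∩ S j = S j ∩ A := by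
      rw [union_inter_distrib_right, disjoint_iff_inter_eq_empty.1 hdisj', union_empty, inter_comm]
    have hstep := hsub (A ∪ s.biUnion S) (S j)
    rw [hinter] at hstep
    have hprev := ih (hdisj.subset (coe_subset.2 (subset_insert j s)))
    rw [biUnion_insert, sum_insert hj, sum_insert hj, union_comm (S j), ← union_assoc]
    linarith

lemma dilworth_union_add_dilworth_inter_le_add_apply
    (hsub : ∀ X Y : Finset α, f (X ∪ Y) + f (X ∩ Y) ≤ f X + f Y)
    (hnonneg : ∀ I : Finset α, I.Nonempty → 0 ≤ f I) (X : Finset α) {A : Finset α}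
    (hA : A.Nonempty) : dilworth f (X ∪ A) + dilworth f (X ∩ A) ≤ dilworth f X + f A := by
  obtain ⟨P, hP, hPX⟩ := exists_isPartitionOf_dilworth_eq hnonneg X
  set R := P.filter fun S => Disjoint S A
  set T := P.filter fun S => ¬Disjoint S A
  have hRP : (R : Set (Finset α)) ⊆ P := coe_subset.2 (filter_subset _ P)
  have hTP : (T : Set (Finset α)) ⊆ P := coe_subset.2 (filter_subset _ P)
  have hX : R.biUnion id ∪ T.biUnion id = X := hP.biUnion_filter_union_biUnion_filter_not _
  have hRA : Disjoint (R.biUnion id) A :=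
    (disjoint_biUnion_left _ _ _).2 fun S hS => (mem_filter.1 hS).2
  have hR : Disjoint (A ∪ T.biUnion id) (R.biUnion id) := disjoint_union_left.2
    ⟨hRA.symm, (hP.disjoint_biUnion_filter_biUnion_filter_not _).symm⟩
  have hunion : dilworth f (X ∪ A) ≤ f (A ∪ T.biUnion id) + ∑ S ∈ R, f S :=
    calc dilworth f (X ∪ A) = dilworth f ((A ∪ T.biUnion id) ∪ R.biUnion id) := by
          rw [← hX]
          ac_rfl
      _ ≤ dilworth f (A ∪ T.biUnion id) + dilworth f (R.biUnion id) := dilworth_union_le hnonneg hR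
      _ ≤ f (A ∪ T.biUnion id) + ∑ S ∈ R, f S :=
          add_le_add (dilworth_le_apply hnonneg (hA.mono subset_union_left))
            (dilworth_biUnion_le_sum hnonneg (fun S hS => hP.1 S (mem_filter.1 hS).1)
              (hP.pairwiseDisjoint.subset hRP))
  have hinter : dilworth f (X ∩ A) ≤ ∑ S ∈ T, f (S ∩ A) := by
    have hXA : X ∩ A = T.biUnion (· ∩ A) := by
      rw [← hX, union_inter_distrib_right, disjoint_iff_inter_eq_empty.1 hRA,
        empty_union, biUnion_inter]
      rfl
    rw [hXA]
    exact dilworth_biUnion_le_sum hnonneg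
      (fun S hS => not_disjoint_iff_nonempty_inter.1 (mem_filter.1 hS).2)
      ((hP.pairwiseDisjoint.subset hTP).mono fun _ => inter_subset_left)
  have hchain := submodular_union_biUnion_le hsub A T (hP.pairwiseDisjoint.subset hTP)
  have hsplit : ∑ S ∈ R, f S + ∑ S ∈ T, f S = dilworth f X := by
    rw [hPX, sum_filter_add_sum_filter_not]
  simp only [id] at hchain
  linarith

lemma dilworth_union_biUnion_add_dilworth_inter_le
    (hsub : ∀ X Y : Finset α, f (X ∪ Y) + f (X ∩ Y) ≤ f X + f Y)
    (hnonneg : ∀ I : Finset α, I.Nonempty → 0 ≤ f I)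
    {ι : Type*} [DecidableEq ι] (s : Finset ι) {B : ι → Finset α}
    (hne : ∀ i ∈ s, (B i).Nonempty) (hdisj : (s : Set ι).PairwiseDisjoint B) (X : Finset α) :
    dilworth f (X ∪ s.biUnion B) + dilworth f (X ∩ s.biUnion B) ≤
      dilworth f X + ∑ i ∈ s, f (B i) := by
  induction s using Finset.induction_on generalizing X with
  | empty => simp [dilworth_empty]
  | insert j s hj ih =>
    set Y := s.biUnion B
    have hjY : Disjoint (B j) Y := (disjoint_biUnion_right _ _ _).2
      fun i hi => hdisj (mem_insert_self j s) (mem_insert_of_mem hi)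
        (ne_of_mem_of_not_mem hi hj).symm
    have hrest := ih (fun i hi => hne i (mem_insert_of_mem hi))
      (hdisj.subset (coe_subset.2 (subset_insert j s))) (X ∪ B j)
    have hfirst := dilworth_union_add_dilworth_inter_le_add_apply hsub hnonneg X
      (hne j (mem_insert_self j s))
    have hsplit := dilworth_union_le hnonneg (f := f)
      (hjY.mono inter_subset_right inter_subset_right : Disjoint (X ∩ B j) (X ∩ Y))
    rw [union_inter_distrib_right, disjoint_iff_inter_eq_empty.1 hjY, union_empty] at hrest
    rw [biUnion_insert, sum_insert hj, ← union_assoc, inter_union_distrib_left]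
    linarith

theorem dilworth_union_add_dilworth_inter_le
    (hsub : ∀ X Y : Finset α, f (X ∪ Y) + f (X ∩ Y) ≤ f X + f Y)
    (hnonneg : ∀ I : Finset α, I.Nonempty → 0 ≤ f I) (X Y : Finset α) :
    dilworth f (X ∪ Y) + dilworth f (X ∩ Y) ≤ dilworth f X + dilworth f Y := by
  obtain ⟨Q, hQ, hQY⟩ := exists_isPartitionOf_dilworth_eq hnonneg Y
  rw [hQY, ← hQ.biUnion_eq]
  exact dilworth_union_biUnion_add_dilworth_inter_le hsub hnonneg Q hQ.1 hQ.pairwiseDisjoint X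

end

theorem stmt1_general {α : Type*} [DecidableEq α] (f : Finset α → ℤ)
    (hsub : ∀ X Y : Finset α, f (X ∪ Y) + f (X ∩ Y) ≤ f X + f Y)
    (hmono : ∀ X Y : Finset α, X ⊆ Y → f X ≤ f Y)
    (hnonneg : ∀ I : Finset α, I.Nonempty → 0 ≤ f I) :
    (∀ X Y : Finset α, X ⊆ Y → dilworth f X ≤ dilworth f Y) ∧
    (∀ X Y : Finset α, dilworth f (X ∪ Y) + dilworth f (X ∩ Y) ≤ dilworth f X + dilworth f Y) ∧
    dilworth f ∅ = 0 :=
  ⟨fun _ _ => dilworth_mono hmono hnonneg, dilworth_union_add_dilworth_inter_le hsub hnonneg,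
    dilworth_empty f⟩

/-- If `f : 2^E → ℤ` is monotone, submodular and non-negative on nonempty
sets, then its Dilworth truncation `f^D` is monotone and submodular (and `f^D ∅ = 0`), so
`(E, f^D)` is a polymatroid. -/
theorem stmt1 {α : Type*} [Fintype α] [DecidableEq α] (f : Finset α → ℤ)
    (hsub : ∀ X Y : Finset α, f (X ∪ Y) + f (X ∩ Y) ≤ f X + f Y)
    (hmono : ∀ X Y : Finset α, X ⊆ Y → f X ≤ f Y)
    (hnonneg : ∀ I : Finset α, I.Nonempty → 0 ≤ f I) :
    (∀ X Y : Finset α, X ⊆ Y → dilworth f X ≤ dilworth f Y) ∧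
    (∀ X Y : Finset α, dilworth f (X ∪ Y) + dilworth f (X ∩ Y) ≤ dilworth f X + dilworth f Y) ∧
    dilworth f ∅ = 0 :=
  stmt1_general f hsub hmono hnonneg
end

section
/- Let E be a finite set and f : 2^E → ℤ a set function that is monotone, submodular, and satisfies f(I) ≥ 0 for every nonempty I ⊆ E. Then the collection {F ⊆ E : |I| ≤ f(I) for all nonempty I ⊆ F} is the family of independent sets of a matroid on E; moreover, a set F belongs to this collection if and only if |I| ≤ f^D(I) for all I ⊆ F, where f^D is the Dilworth truncation of f. -/
open Finset

/-- Exchange property for the independence system defined by a submodular function. -/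
lemma submod_exchange {α : Type*} [DecidableEq α] (f : Finset α → ℤ)
    (hsub : ∀ X Y : Finset α, f (X ∪ Y) + f (X ∩ Y) ≤ f X + f Y)
    (hmono : ∀ X Y : Finset α, X ⊆ Y → f X ≤ f Y)
    {I J : Finset α}
    (hI : ∀ S ⊆ I, S.Nonempty → (S.card : ℤ) ≤ f S)
    (hJ : ∀ S ⊆ J, S.Nonempty → (S.card : ℤ) ≤ f S)
    (hcard : I.card < J.card) :
    ∃ e ∈ J, e ∉ I ∧ ∀ S ⊆ insert e I, S.Nonempty → (S.card : ℤ) ≤ f S := by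
  classical
  by_contra hcon
  push_neg at hcon
  -- hcon : ∀ e ∈ J, e ∉ I → ∃ S ⊆ insert e I, S.Nonempty ∧ f S < S.card
  set K := J \ I with hK
  -- Step 1: tight witness sets
  have key : ∀ e : α, ∃ A : Finset α, e ∈ K →
      A ⊆ I ∧ A.Nonempty ∧ f A = A.card ∧ f (insert e A) ≤ (A.card : ℤ) := by
    intro e
    by_cases he : e ∈ K
    · rw [hK, Finset.mem_sdiff] at he
      obtain ⟨C, hCsub, hCne, hCviol⟩ := hcon e he.1 he.2
      have heC : e ∈ C := by
        by_contra heC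
        have hCI : C ⊆ I := by
          intro x hx
          rcases Finset.mem_insert.1 (hCsub hx) with h | h
          · exact absurd (h ▸ hx) heC
          · exact h
        exact absurd (hI C hCI hCne) (not_le.2 hCviol)
      set A := C.erase e with hAdef
      have hAI : A ⊆ I := by
        intro x hx
        rcases Finset.mem_insert.1 (hCsub (Finset.mem_of_mem_erase hx)) with h | h
        · exact absurd h (Finset.ne_of_mem_erase hx)
        · exact h
      have hCA : C = insert e A := (Finset.insert_erase heC).symm
      have hAne : A.Nonempty := by
        rcases A.eq_empty_or_nonempty with h | h
        · exfalso
          have hCe : C = {e} := by rw [hCA, h]; rfl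
          have h1 : (1 : ℤ) ≤ f {e} := by
            simpa using hJ {e} (Finset.singleton_subset_iff.2 he.1) ⟨e, by simp⟩
          rw [hCe] at hCviol
          simp only [Finset.card_singleton, Nat.cast_one] at hCviol
          omega
        · exact h
      have hcardA : (A.card : ℤ) = (C.card : ℤ) - 1 := by
        rw [hCA, Finset.card_insert_of_notMem (Finset.notMem_erase e C)]
        push_cast; ring
      have hfC : f C ≤ (A.card : ℤ) := by omega
      have hAtight : f A = A.card := by
        have h1 : f A ≤ f C := hmono A C (hCA ▸ Finset.subset_insert e A)
        have h2 : (A.card : ℤ) ≤ f A := hI A hAI hAne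
        omega
      exact ⟨A, fun _ => ⟨hAI, hAne, hAtight, hCA ▸ hfC⟩⟩
    · exact ⟨∅, fun h => absurd h he⟩
  choose A hA using key
  -- Tightness machinery
  set Tight : Finset α → Prop := fun T => T ⊆ I ∧ T.Nonempty ∧ f T = T.card with hTight
  have tight_union : ∀ T1 T2, Tight T1 → Tight T2 → (T1 ∩ T2).Nonempty → Tight (T1 ∪ T2) := by
    intro T1 T2 h1 h2 hne
    have hsubI : T1 ∪ T2 ⊆ I := Finset.union_subset h1.1 h2.1
    have hIne : T1 ∩ T2 ⊆ I := (Finset.inter_subset_left).trans h1.1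
    have hc : ((T1 ∩ T2).card : ℤ) ≤ f (T1 ∩ T2) := hI _ hIne hne
    have hcu : ((T1 ∪ T2).card : ℤ) ≤ f (T1 ∪ T2) :=
      hI _ hsubI (h1.2.1.mono Finset.subset_union_left)
    have hcard2 : (T1 ∪ T2).card + (T1 ∩ T2).card = T1.card + T2.card :=
      Finset.card_union_add_card_inter T1 T2
    have := hsub T1 T2
    refine ⟨hsubI, h1.2.1.mono Finset.subset_union_left, ?_⟩
    have hcast : ((T1 ∪ T2).card : ℤ) + ((T1 ∩ T2).card : ℤ)
        = (T1.card : ℤ) + (T2.card : ℤ) := by exact_mod_cast congrArg (Nat.cast : ℕ → ℤ) hcard2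
    have e1 : f T1 = (T1.card : ℤ) := h1.2.2
    have e2 : f T2 = (T2.card : ℤ) := h2.2.2
    omega
  -- union of a nonempty family of tight sets containing a fixed nonempty B is tight
  have sup_tight : ∀ (B : Finset α), B.Nonempty → ∀ (𝒯 : Finset (Finset α)), 𝒯.Nonempty →
      (∀ T ∈ 𝒯, Tight T ∧ B ⊆ T) → Tight (𝒯.sup id) ∧ B ⊆ 𝒯.sup id := by
    intro B hB 𝒯
    induction 𝒯 using Finset.induction_on with
    | empty => intro h; exact absurd rfl h.ne_empty
    | @insert T 𝒮 hT ih =>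
      intro _ hall
      rcases 𝒮.eq_empty_or_nonempty with h𝒮 | h𝒮
      · subst h𝒮
        simpa using hall T (Finset.mem_insert_self T ∅)
      · obtain ⟨ht, hBt⟩ := ih h𝒮 (fun T' hT' => hall T' (Finset.mem_insert_of_mem hT'))
        have hTprop := hall T (Finset.mem_insert_self T 𝒮)
        have hint : (T ∩ 𝒮.sup id).Nonempty :=
          hB.mono (Finset.subset_inter hTprop.2 hBt)
        have : Tight (T ∪ 𝒮.sup id) := tight_union _ _ hTprop.1 ht hint
        rw [Finset.sup_insert]
        exact ⟨this, hTprop.2.trans Finset.subset_union_left⟩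
  -- the maximal tight set containing A e
  set M : α → Finset α := fun e =>
    (I.powerset.filter (fun T => Tight T ∧ A e ⊆ T)).sup id with hM
  have hMprop : ∀ e ∈ K, Tight (M e) ∧ A e ⊆ M e := by
    intro e he
    obtain ⟨hAI, hAne, hAtight, _⟩ := hA e he
    have hmem : A e ∈ I.powerset.filter (fun T => Tight T ∧ A e ⊆ T) := by
      simp only [Finset.mem_filter, Finset.mem_powerset]
      exact ⟨hAI, ⟨hAI, hAne, hAtight⟩, Finset.Subset.refl _⟩
    exact sup_tight (A e) hAne _ ⟨A e, hmem⟩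
      (fun T hT => (Finset.mem_filter.1 hT).2)
  have hMmax : ∀ e ∈ K, ∀ T, Tight T → A e ⊆ T → T ⊆ M e := by
    intro e _ T hT hAT
    have : T ∈ I.powerset.filter (fun T => Tight T ∧ A e ⊆ T) := by
      simp only [Finset.mem_filter, Finset.mem_powerset]
      exact ⟨hT.1, hT, hAT⟩
    exact Finset.le_sup (f := id) this
  have hMdisj : ∀ e ∈ K, ∀ e' ∈ K, M e ≠ M e' → Disjoint (M e) (M e') := by
    intro e he e' he' hne
    rw [Finset.disjoint_iff_inter_eq_empty]
    by_contra hint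
    have hint' : (M e ∩ M e').Nonempty := Finset.nonempty_iff_ne_empty.2 hint
    have hu : Tight (M e ∪ M e') := tight_union _ _ (hMprop e he).1 (hMprop e' he').1 hint'
    have h1 : M e ∪ M e' ⊆ M e :=
      hMmax e he _ hu ((hMprop e he).2.trans Finset.subset_union_left)
    have h2 : M e ∪ M e' ⊆ M e' :=
      hMmax e' he' _ hu ((hMprop e' he').2.trans Finset.subset_union_right)
    have hee' : M e' ⊆ M e := Finset.subset_union_right.trans h1
    have he'e : M e ⊆ M e' := Finset.subset_union_left.trans h2
    exact hne (le_antisymm he'e hee')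
  -- growing a tight set by blocked elements
  have grow : ∀ (E' : Finset α), E' ⊆ K → ∀ T, Tight T → (∀ e ∈ E', A e ⊆ T) →
      f (T ∪ E') ≤ (T.card : ℤ) := by
    intro E'
    induction E' using Finset.induction_on with
    | empty => intro _ T hT _; rw [Finset.union_empty]; exact le_of_eq hT.2.2
    | @insert e E'' he ih =>
      intro hsubK T hT hall
      have heK : e ∈ K := hsubK (Finset.mem_insert_self e E'')
      obtain ⟨hAI, hAne, hAtight, hAc⟩ := hA e heK
      have hAT : A e ⊆ T := hall e (Finset.mem_insert_self e E'')
      have hX : f (T ∪ E'') ≤ (T.card : ℤ) :=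
        ih (fun x hx => hsubK (Finset.mem_insert_of_mem hx)) T hT
          (fun x hx => hall x (Finset.mem_insert_of_mem hx))
      have heI : e ∉ I := (Finset.mem_sdiff.1 heK).2
      have heT : e ∉ T := fun h => heI (hT.1 h)
      have hXY : (T ∪ E'') ∩ (insert e (A e)) = A e := by
        apply Finset.Subset.antisymm
        · intro x hx
          rcases Finset.mem_inter.1 hx with ⟨hx1, hx2⟩
          rcases Finset.mem_insert.1 hx2 with h | h
          · subst h
            rcases Finset.mem_union.1 hx1 with h' | h'
            · exact absurd h' heT
            · exact absurd h' he
          · exact h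
        · exact Finset.subset_inter (hAT.trans Finset.subset_union_left)
            (Finset.subset_insert e (A e))
      have hXuY : (T ∪ E'') ∪ (insert e (A e)) = T ∪ insert e E'' := by
        ext x
        simp only [Finset.mem_union, Finset.mem_insert]
        constructor
        · rintro ((h | h) | (h | h))
          · exact Or.inl h
          · exact Or.inr (Or.inr h)
          · exact Or.inr (Or.inl h)
          · exact Or.inl (hAT h)
        · rintro (h | h | h)
          · exact Or.inl (Or.inl h)
          · exact Or.inr (Or.inl h)
          · exact Or.inl (Or.inr h)
      have hs := hsub (T ∪ E'') (insert e (A e))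
      rw [hXY, hXuY] at hs
      have hAeq : f (A e) = ((A e).card : ℤ) := hAtight
      linarith
  -- counting
  have count1 : ∀ T ∈ K.image M, (K.filter (fun e => M e = T)).card ≤ (T \ J).card := by
    intro T hT
    obtain ⟨e0, he0K, he0⟩ := Finset.mem_image.1 hT
    have hTt : Tight T := he0 ▸ (hMprop e0 he0K).1
    set ET := K.filter (fun e => M e = T) with hET
    have hETne : ET.Nonempty := ⟨e0, Finset.mem_filter.2 ⟨he0K, he0⟩⟩
    have hETK : ET ⊆ K := Finset.filter_subset _ _
    have hgrow : f (T ∪ ET) ≤ (T.card : ℤ) := by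
      apply grow ET hETK T hTt
      intro e he
      have hmem := Finset.mem_filter.1 he
      exact hmem.2 ▸ (hMprop e hmem.1).2
    set W := (T ∩ J) ∪ ET with hW
    have hWJ : W ⊆ J := Finset.union_subset Finset.inter_subset_right
      (hETK.trans Finset.sdiff_subset)
    have hWne : W.Nonempty := hETne.mono Finset.subset_union_right
    have h1 : (W.card : ℤ) ≤ f W := hJ W hWJ hWne
    have h2 : f W ≤ f (T ∪ ET) :=
      hmono _ _ (Finset.union_subset_union_left Finset.inter_subset_left)
    have hdisj : Disjoint (T ∩ J) ET := by
      rw [Finset.disjoint_left]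
      intro x hx1 hx2
      have hxI : x ∈ I := hTt.1 (Finset.mem_inter.1 hx1).1
      exact (Finset.mem_sdiff.1 (hETK hx2)).2 hxI
    have hcardW : W.card = (T ∩ J).card + ET.card := Finset.card_union_of_disjoint hdisj
    have hTcard : (T ∩ J).card + (T \ J).card = T.card := Finset.card_inter_add_card_sdiff T J
    have hZ : (W.card : ℤ) ≤ (T.card : ℤ) := le_trans h1 (le_trans h2 hgrow)
    omega
  have count2 : K.card = ∑ T ∈ K.image M, (K.filter (fun e => M e = T)).card :=
    Finset.card_eq_sum_card_fiberwise (fun e he => Finset.mem_image_of_mem M he)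
  have hbi : ((K.image M).biUnion (fun T => T \ J)).card
      = ∑ T ∈ K.image M, (T \ J).card := by
    apply Finset.card_biUnion
    intro T1 h1 T2 h2 hne
    obtain ⟨e1, he1K, he1⟩ := Finset.mem_image.1 h1
    obtain ⟨e2, he2K, he2⟩ := Finset.mem_image.1 h2
    have hd := hMdisj e1 he1K e2 he2K (by rw [he1, he2]; exact hne)
    rw [he1, he2] at hd
    exact hd.mono Finset.sdiff_subset Finset.sdiff_subset
  have count3 : ∑ T ∈ K.image M, (T \ J).card ≤ (I \ J).card := by
    rw [← hbi]
    apply Finset.card_le_card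
    intro x hx
    obtain ⟨T, hT, hxT⟩ := Finset.mem_biUnion.1 hx
    obtain ⟨e0, he0K, he0⟩ := Finset.mem_image.1 hT
    have hTt : Tight T := he0 ▸ (hMprop e0 he0K).1
    rcases Finset.mem_sdiff.1 hxT with ⟨hx1, hx2⟩
    exact Finset.mem_sdiff.2 ⟨hTt.1 hx1, hx2⟩
  have hsum : K.card ≤ (I \ J).card := by
    rw [count2]
    exact le_trans (Finset.sum_le_sum count1) count3
  have e1 : (I ∩ J).card + (I \ J).card = I.card := Finset.card_inter_add_card_sdiff I J
  have e2 : (J ∩ I).card + (J \ I).card = J.card := Finset.card_inter_add_card_sdiff J I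
  have e3 : (I ∩ J).card = (J ∩ I).card := by rw [Finset.inter_comm]
  have hKc : K.card = (J \ I).card := rfl
  omega


lemma partition_singleton {α : Type*} [DecidableEq α] {F : Finset α} (hF : F.Nonempty) :
    IsPartitionOf {F} F :=
  ⟨fun S hS => (Finset.mem_singleton.1 hS) ▸ hF,
   fun S hS T hT hne =>
     absurd ((Finset.mem_singleton.1 hS).trans (Finset.mem_singleton.1 hT).symm) hne,
   Finset.sup_singleton⟩

lemma partition_card {α : Type*} [DecidableEq α] {P : Finset (Finset α)} {F : Finset α}
    (hP : IsPartitionOf P F) : ∑ S ∈ P, (S.card : ℤ) = (F.card : ℤ) := by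
  obtain ⟨_, hdisj, hsup⟩ := hP
  have hF : F = P.biUnion id := by rw [← hsup, Finset.sup_eq_biUnion]
  have hn : (P.biUnion id).card = ∑ S ∈ P, (id S).card := Finset.card_biUnion hdisj
  rw [hF, hn]
  push_cast
  rfl

/-- If `f : 2^E → ℤ` is monotone, submodular and non-negative on nonempty
sets, then `{F ⊆ E : |I| ≤ f(I) for all nonempty I ⊆ F}` is the family of independent sets
of a matroid on `E`; moreover `F` belongs to this collection iff `|I| ≤ f^D(I)` for all
`I ⊆ F`, where `f^D` is the Dilworth truncation of `f`. -/
theorem stmt2 {α : Type*} [Fintype α] [DecidableEq α] (f : Finset α → ℤ)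
    (hsub : ∀ X Y : Finset α, f (X ∪ Y) + f (X ∩ Y) ≤ f X + f Y)
    (hmono : ∀ X Y : Finset α, X ⊆ Y → f X ≤ f Y)
    (hnonneg : ∀ I : Finset α, I.Nonempty → 0 ≤ f I) :
    (∃ M : Matroid α, M.E = Set.univ ∧
      (∀ F : Finset α, M.Indep ↑F ↔ ∀ I ⊆ F, I.Nonempty → (I.card : ℤ) ≤ f I)) ∧
    (∀ F : Finset α,
      (∀ I ⊆ F, I.Nonempty → (I.card : ℤ) ≤ f I) ↔
      (∀ I ⊆ F, (I.card : ℤ) ≤ dilworth f I)) := by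
  classical
  constructor
  · -- the matroid
    have hempty : ∀ I ⊆ (∅ : Finset α), I.Nonempty → (I.card : ℤ) ≤ f I := by
      intro I hI hne
      rw [Finset.subset_empty.1 hI] at hne
      exact absurd rfl hne.ne_empty
    have hsubcl : ∀ ⦃I J : Finset α⦄,
        (∀ S ⊆ J, S.Nonempty → (S.card : ℤ) ≤ f S) → I ⊆ J →
        (∀ S ⊆ I, S.Nonempty → (S.card : ℤ) ≤ f S) :=
      fun I J hJ hIJ S hS hSne => hJ S (hS.trans hIJ) hSne
    refine ⟨(IndepMatroid.ofFinset Set.univ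
      (fun F => ∀ I ⊆ F, I.Nonempty → (I.card : ℤ) ≤ f I)
      hempty hsubcl
      (fun I J hI hJ hc => submod_exchange f hsub hmono hI hJ hc)
      (fun I _ => Set.subset_univ _)).matroid, rfl, ?_⟩
    intro F
    rw [IndepMatroid.matroid_indep_iff, IndepMatroid.ofFinset_indep]
  · -- dilworth characterization
    intro F
    constructor
    · intro h I hIF
      rcases I.eq_empty_or_nonempty with rfl | hne
      · simp [dilworth]
      · rw [dilworth, if_neg hne.ne_empty]
        apply le_csInf
        · exact ⟨∑ S ∈ ({I} : Finset (Finset α)), f S, {I}, partition_singleton hne, rfl⟩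
        · rintro s ⟨P, hP, rfl⟩
          calc (I.card : ℤ) = ∑ S ∈ P, (S.card : ℤ) := (partition_card hP).symm
            _ ≤ ∑ S ∈ P, f S := Finset.sum_le_sum (fun S hS =>
                h S ((hP.2.2 ▸ Finset.le_sup (f := id) hS).trans hIF) (hP.1 S hS))
    · intro h I hIF hne
      have h1 : (I.card : ℤ) ≤ dilworth f I := h I hIF
      have h2 : dilworth f I ≤ f I := by
        rw [dilworth, if_neg hne.ne_empty]
        apply csInf_le
        · refine ⟨0, ?_⟩
          rintro s ⟨P, hP, rfl⟩
          exact Finset.sum_nonneg (fun S hS => hnonneg S (hP.1 S hS))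
        · exact ⟨{I}, partition_singleton hne, by simp⟩
      linarith
end

section
/- Let E be a finite set and f : 2^E → ℤ a set function that is monotone, submodular, and satisfies f(I) ≥ 0 for every nonempty I ⊆ E. Then the rank function of the matroid on E whose independent sets are {F ⊆ E : |I| ≤ f(I) for all nonempty I ⊆ F} is given, for every nonempty F ⊆ E, by r(F) = f^MD(F) := min{|F_0| + Σ_{i=1}^t f(F_i) : F_0 ⊆ F and {F_1, …, F_t} is a partition of F ∖ F_0 into nonempty sets}. -/
/-- The "matroidal Dilworth truncation" `f^MD` of a set function `f`:
`f^MD(F) = min {|F₀| + ∑ᵢ f(Fᵢ) : F₀ ⊆ F, {F₁,…,Fₜ} a partition of F \ F₀}`. -/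
noncomputable def minDilworth {α : Type*} [DecidableEq α] (f : Finset α → ℤ) (F : Finset α) : ℤ :=
  sInf {s : ℤ | ∃ F₀ ⊆ F, ∃ P : Finset (Finset α),
    IsPartitionOf P (F \ F₀) ∧ s = (F₀.card : ℤ) + ∑ S ∈ P, f S}

section Aux

variable {α : Type*} [DecidableEq α]

/-- Upper bound: any independent `J ⊆ F` has cardinality at most the value of any
feasible pair `(F₀, P)`. -/
lemma card_le_partition_value (f : Finset α → ℤ)
    (hmono : ∀ X Y : Finset α, X ⊆ Y → f X ≤ f Y)
    (hnonneg : ∀ I : Finset α, I.Nonempty → 0 ≤ f I)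
    {F J F₀ : Finset α} {P : Finset (Finset α)}
    (hJF : J ⊆ F) (hind : ∀ I ⊆ J, I.Nonempty → (I.card : ℤ) ≤ f I)
    (hF₀ : F₀ ⊆ F) (hP : IsPartitionOf P (F \ F₀)) :
    (J.card : ℤ) ≤ (F₀.card : ℤ) + ∑ S ∈ P, f S := by
  obtain ⟨hne, hdisj, hsup⟩ := hP
  have hsplit : (J ∩ F₀).card + (J \ F₀).card = J.card :=
    Finset.card_inter_add_card_sdiff J F₀
  have hsub1 : J \ F₀ ⊆ P.biUnion (fun S => S ∩ J) := by
    intro a ha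
    have haF : a ∈ F \ F₀ := by
      simp only [Finset.mem_sdiff] at ha ⊢
      exact ⟨hJF ha.1, ha.2⟩
    rw [← hsup, Finset.sup_eq_biUnion, Finset.mem_biUnion] at haF
    obtain ⟨S, hS, haS⟩ := haF
    simp only [id] at haS
    exact Finset.mem_biUnion.2 ⟨S, hS, Finset.mem_inter.2 ⟨haS, (Finset.mem_sdiff.1 ha).1⟩⟩
  have hcard1 : (J \ F₀).card ≤ ∑ S ∈ P, (S ∩ J).card := by
    calc (J \ F₀).card ≤ (P.biUnion (fun S => S ∩ J)).card := Finset.card_le_card hsub1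
    _ ≤ ∑ S ∈ P, (S ∩ J).card := Finset.card_biUnion_le
  have hcard2 : ∀ S ∈ P, ((S ∩ J).card : ℤ) ≤ f S := by
    intro S hS
    rcases (S ∩ J).eq_empty_or_nonempty with h | h
    · rw [h]; simpa using hnonneg S (hne S hS)
    · calc ((S ∩ J).card : ℤ) ≤ f (S ∩ J) := hind _ Finset.inter_subset_right h
        _ ≤ f S := hmono _ _ Finset.inter_subset_left
  have h1 : ((J ∩ F₀).card : ℤ) ≤ (F₀.card : ℤ) := by
    exact_mod_cast Finset.card_le_card (Finset.inter_subset_right)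
  have h2 : ((J \ F₀).card : ℤ) ≤ ∑ S ∈ P, f S := by
    calc ((J \ F₀).card : ℤ) ≤ ((∑ S ∈ P, (S ∩ J).card : ℕ) : ℤ) := by exact_mod_cast hcard1
      _ = ∑ S ∈ P, ((S ∩ J).card : ℤ) := by push_cast; ring
      _ ≤ ∑ S ∈ P, f S := Finset.sum_le_sum hcard2
  have := hsplit
  push_cast [← hsplit]
  linarith

end Aux

theorem stmt3 {α : Type*} [Fintype α] [DecidableEq α] (f : Finset α → ℤ)
    (hsub : ∀ X Y : Finset α, f (X ∪ Y) + f (X ∩ Y) ≤ f X + f Y)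
    (hmono : ∀ X Y : Finset α, X ⊆ Y → f X ≤ f Y)
    (hnonneg : ∀ I : Finset α, I.Nonempty → 0 ≤ f I) :
    ∀ F : Finset α, F.Nonempty →
      (∃ J ⊆ F, (∀ I ⊆ J, I.Nonempty → (I.card : ℤ) ≤ f I) ∧
        (J.card : ℤ) = minDilworth f F) ∧
      (∀ J ⊆ F, (∀ I ⊆ J, I.Nonempty → (I.card : ℤ) ≤ f I) →
        (J.card : ℤ) ≤ minDilworth f F) := by
  classical
  intro F _hF
  set A : Set ℤ := {s : ℤ | ∃ F₀ ⊆ F, ∃ P : Finset (Finset α),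
    IsPartitionOf P (F \ F₀) ∧ s = (F₀.card : ℤ) + ∑ S ∈ P, f S} with hA
  have hmd : minDilworth f F = sInf A := rfl
  have hAne : A.Nonempty := by
    refine ⟨(F.card : ℤ), F, subset_rfl, ∅, ⟨by simp, by simp, by simp⟩, by simp⟩
  have hAbdd : BddBelow A := by
    refine ⟨0, fun s hs => ?_⟩
    obtain ⟨F₀, hF₀, P, ⟨hne, _, _⟩, rfl⟩ := hs
    have h1 : (0:ℤ) ≤ ∑ S ∈ P, f S :=
      Finset.sum_nonneg (fun S hS => hnonneg S (hne S hS))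
    positivity
  -- upper bound for all independent subsets
  have hub : ∀ J ⊆ F, (∀ I ⊆ J, I.Nonempty → (I.card : ℤ) ≤ f I) →
      (J.card : ℤ) ≤ sInf A := by
    intro J hJ hind
    refine le_csInf hAne (fun s hs => ?_)
    obtain ⟨F₀, hF₀, P, hP, rfl⟩ := hs
    exact card_le_partition_value f hmono hnonneg hJ hind hF₀ hP
  rw [hmd]
  refine ⟨?_, hub⟩
  -- choose a maximum-cardinality independent subset J of F
  set 𝒮 : Finset (Finset α) :=
    F.powerset.filter (fun J => ∀ I ⊆ J, I.Nonempty → (I.card : ℤ) ≤ f I) with h𝒮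
  have h𝒮ne : 𝒮.Nonempty := ⟨∅, by simp [h𝒮, Finset.subset_empty]⟩
  obtain ⟨J, hJ𝒮, hJmax⟩ := 𝒮.exists_max_image Finset.card h𝒮ne
  rw [h𝒮, Finset.mem_filter, Finset.mem_powerset] at hJ𝒮
  obtain ⟨hJF, hind⟩ := hJ𝒮
  refine ⟨J, hJF, hind, ?_⟩
  -- tight sets
  set Tight : Finset α → Prop :=
    fun T => T ⊆ F ∧ T.Nonempty ∧ f T = ((T ∩ J).card : ℤ) with hTight
  have lb : ∀ T : Finset α, T.Nonempty → ((T ∩ J).card : ℤ) ≤ f T := by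
    intro T hT
    rcases (T ∩ J).eq_empty_or_nonempty with h | h
    · rw [h]; simpa using hnonneg T hT
    · calc ((T ∩ J).card : ℤ) ≤ f (T ∩ J) := hind _ Finset.inter_subset_right h
        _ ≤ f T := hmono _ _ Finset.inter_subset_left
  have tight_union : ∀ T S : Finset α, Tight T → Tight S → (T ∩ S).Nonempty →
      Tight (T ∪ S) := by
    intro T S ⟨hTF, hTne, hTt⟩ ⟨hSF, hSne, hSt⟩ hTS
    have hcard : ((T ∪ S) ∩ J).card + ((T ∩ S) ∩ J).card
        = (T ∩ J).card + (S ∩ J).card := by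
      have e1 : (T ∪ S) ∩ J = (T ∩ J) ∪ (S ∩ J) := Finset.union_inter_distrib_right T S J
      have e2 : (T ∩ S) ∩ J = (T ∩ J) ∩ (S ∩ J) := by
        ext a; simp only [Finset.mem_inter]; tauto
      rw [e1, e2]
      exact Finset.card_union_add_card_inter _ _
    have h1 := lb (T ∪ S) (hTne.mono Finset.subset_union_left)
    have h2 := lb (T ∩ S) hTS
    have h3 := hsub T S
    refine ⟨Finset.union_subset hTF hSF, hTne.mono Finset.subset_union_left, ?_⟩
    have hc : (((T ∪ S) ∩ J).card : ℤ) + (((T ∩ S) ∩ J).card : ℤ)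
        = ((T ∩ J).card : ℤ) + ((S ∩ J).card : ℤ) := by exact_mod_cast hcard
    linarith
  -- the maximal tight set containing x
  set U : α → Finset α :=
    fun x => (F.powerset.filter (fun T => Tight T ∧ x ∈ T)).sup id with hU
  have tight_sup : ∀ (x : α) (Q : Finset (Finset α)), Q.Nonempty →
      (∀ T ∈ Q, Tight T ∧ x ∈ T) → Tight (Q.sup id) ∧ x ∈ Q.sup id := by
    intro x Q
    induction Q using Finset.cons_induction with
    | empty => intro h; exact absurd h (by simp)
    | cons a s ha ih =>
      intro _ hall
      rcases s.eq_empty_or_nonempty with rfl | hs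
      · simpa using hall a (Finset.mem_cons_self a _)
      · have h1 := hall a (Finset.mem_cons_self a _)
        have h2 := ih hs (fun T hT => hall T (Finset.mem_cons_of_mem hT))
        rw [Finset.sup_cons, id_eq, Finset.sup_eq_union]
        exact ⟨tight_union a (s.sup id) h1.1 h2.1 ⟨x, Finset.mem_inter.2 ⟨h1.2, h2.2⟩⟩,
          Finset.mem_union_left _ h1.2⟩
  -- every x in F \ J lies in some tight set
  have exists_tight : ∀ x ∈ F \ J, ∃ T, Tight T ∧ x ∈ T := by
    intro x hx
    obtain ⟨hxF, hxJ⟩ := Finset.mem_sdiff.1 hx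
    -- insert x J is not independent
    have hni : ¬ (∀ I ⊆ insert x J, I.Nonempty → (I.card : ℤ) ≤ f I) := by
      intro hcon
      have hmem : insert x J ∈ 𝒮 := by
        rw [h𝒮, Finset.mem_filter, Finset.mem_powerset]
        exact ⟨Finset.insert_subset hxF hJF, hcon⟩
      have := hJmax _ hmem
      rw [Finset.card_insert_of_notMem hxJ] at this
      omega
    push_neg at hni
    obtain ⟨I, hIsub, hIne, hIf⟩ := hni
    have hxI : x ∈ I := by
      by_contra hxI
      have : I ⊆ J := fun a ha => by
        rcases Finset.mem_insert.1 (hIsub ha) with rfl | h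
        · exact absurd ha hxI
        · exact h
      exact absurd (hind I this hIne) (not_le.2 hIf)
    have hIJ : I ∩ J = I.erase x := by
      ext a
      simp only [Finset.mem_inter, Finset.mem_erase]
      constructor
      · rintro ⟨h1, h2⟩; exact ⟨fun h => hxJ (h ▸ h2), h1⟩
      · rintro ⟨h1, h2⟩
        rcases Finset.mem_insert.1 (hIsub h2) with rfl | h
        · exact absurd rfl h1
        · exact ⟨h2, h⟩
    have hcarde : (I ∩ J).card = I.card - 1 := by
      rw [hIJ, Finset.card_erase_of_mem hxI]
    have hc1 : 1 ≤ I.card := Finset.card_pos.2 hIne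
    have hlow := lb I hIne
    refine ⟨I, ⟨hIsub.trans (Finset.insert_subset hxF hJF), hIne, ?_⟩, hxI⟩
    have : ((I ∩ J).card : ℤ) = (I.card : ℤ) - 1 := by
      rw [hcarde]; push_cast [Nat.cast_sub hc1]; ring
    omega
  have hUspec : ∀ x ∈ F \ J, Tight (U x) ∧ x ∈ U x := by
    intro x hx
    obtain ⟨T, hT, hxT⟩ := exists_tight x hx
    refine tight_sup x _ ⟨T, ?_⟩ ?_
    · rw [Finset.mem_filter, Finset.mem_powerset]; exact ⟨hT.1, hT, hxT⟩
    · intro S hS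
      rw [Finset.mem_filter] at hS
      exact hS.2
  have hUmax : ∀ x, ∀ T, Tight T → x ∈ T → T ⊆ U x := by
    intro x T hT hxT
    have hTmem : T ∈ F.powerset.filter (fun T => Tight T ∧ x ∈ T) := by
      rw [Finset.mem_filter, Finset.mem_powerset]; exact ⟨hT.1, hT, hxT⟩
    exact Finset.le_sup (f := id) hTmem
  have hUeq : ∀ x ∈ F \ J, ∀ y ∈ F \ J, ¬ Disjoint (U x) (U y) → U x = U y := by
    intro x hx y hy hnd
    obtain ⟨hTx, hxU⟩ := hUspec x hx
    obtain ⟨hTy, hyU⟩ := hUspec y hy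
    have hinter : (U x ∩ U y).Nonempty := Finset.not_disjoint_iff_nonempty_inter.1 hnd
    have hTu := tight_union _ _ hTx hTy hinter
    have h1 : U x ∪ U y ⊆ U x := hUmax x _ hTu (Finset.mem_union_left _ hxU)
    have h2 : U x ∪ U y ⊆ U y := hUmax y _ hTu (Finset.mem_union_right _ hyU)
    exact subset_antisymm ((Finset.subset_union_left).trans h2)
      ((Finset.subset_union_right).trans h1)
  -- assemble partition
  set P : Finset (Finset α) := (F \ J).image U with hP
  set X : Finset α := P.sup id with hX
  have hXF : X ⊆ F := by
    intro a ha
    rw [hX, Finset.sup_eq_biUnion, Finset.mem_biUnion] at ha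
    obtain ⟨S, hS, haS⟩ := ha
    obtain ⟨x, hx, rfl⟩ := Finset.mem_image.1 hS
    exact (hUspec x hx).1.1 haS
  have hFJX : F \ J ⊆ X := by
    intro x hx
    have hxU := (hUspec x hx).2
    have : U x ⊆ X := Finset.le_sup (f := id) (Finset.mem_image_of_mem U hx)
    exact this hxU
  set F₀ : Finset α := F \ X with hF₀
  have hF₀F : F₀ ⊆ F := Finset.sdiff_subset
  have hF₀J : F₀ ⊆ J := by
    intro a ha
    obtain ⟨haF, haX⟩ := Finset.mem_sdiff.1 ha
    by_contra haJ
    exact haX (hFJX (Finset.mem_sdiff.2 ⟨haF, haJ⟩))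
  have hpart : IsPartitionOf P (F \ F₀) := by
    refine ⟨?_, ?_, ?_⟩
    · intro S hS
      obtain ⟨x, hx, rfl⟩ := Finset.mem_image.1 hS
      exact (hUspec x hx).1.2.1
    · intro S hS T hT hST
      obtain ⟨x, hx, rfl⟩ := Finset.mem_image.1 hS
      obtain ⟨y, hy, rfl⟩ := Finset.mem_image.1 hT
      by_contra hnd
      exact hST (hUeq x hx y hy hnd)
    · rw [hF₀, Finset.sdiff_sdiff_self_left, Finset.inter_eq_right.2 hXF]
  -- compute the value
  have hdisjP : ∀ S ∈ P, ∀ T ∈ P, S ≠ T → Disjoint S T := hpart.2.1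
  have hsum : ∑ S ∈ P, f S = ((X ∩ J).card : ℤ) := by
    have e1 : ∀ S ∈ P, f S = ((S ∩ J).card : ℤ) := by
      intro S hS
      obtain ⟨x, hx, rfl⟩ := Finset.mem_image.1 hS
      exact (hUspec x hx).1.2.2
    rw [Finset.sum_congr rfl e1]
    have e2 : P.biUnion (fun S => S ∩ J) = X ∩ J := by
      ext a
      simp only [Finset.mem_biUnion, Finset.mem_inter, hX, Finset.sup_eq_biUnion,
        Finset.mem_biUnion, id_eq]
      tauto
    have e3 : (P.biUnion (fun S => S ∩ J)).card = ∑ S ∈ P, (S ∩ J).card := by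
      refine Finset.card_biUnion (fun S hS T hT hST => ?_)
      exact (hdisjP S hS T hT hST).mono Finset.inter_subset_left Finset.inter_subset_left
    rw [← e2, e3]
    push_cast
    ring
  have hval : (F₀.card : ℤ) + ∑ S ∈ P, f S = (J.card : ℤ) := by
    rw [hsum]
    have hdXF₀ : Disjoint F₀ (X ∩ J) := by
      refine Finset.disjoint_left.2 (fun a ha haX => ?_)
      exact (Finset.mem_sdiff.1 ha).2 (Finset.mem_inter.1 haX).1
    have hJeq : F₀ ∪ (X ∩ J) = J := by
      apply subset_antisymm
      · exact Finset.union_subset hF₀J Finset.inter_subset_right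
      · intro a ha
        by_cases haX : a ∈ X
        · exact Finset.mem_union_right _ (Finset.mem_inter.2 ⟨haX, ha⟩)
        · exact Finset.mem_union_left _ (Finset.mem_sdiff.2 ⟨hJF ha, haX⟩)
    have h := Finset.card_union_of_disjoint hdXF₀
    rw [hJeq] at h
    omega
  have hmem : (J.card : ℤ) ∈ A := ⟨F₀, hF₀F, P, hpart, hval.symm⟩
  exact le_antisymm (hub J hJF hind) (csInf_le hAbdd hmem)
end

section
/- Let 𝔽 ∈ {ℝ, ℂ} and let {A_e : e ∈ E} be a finite family of nonzero linear subspaces of 𝔽^n. Let H be a codimension-one linear subspace of 𝔽^n that is regular with respect to {A_e}. Then dim span{A_e ∩ H : e ∈ E} = min{Σ_{i=1}^t (dim span{A_e : e ∈ F_i} − 1) : {F_1, …, F_t} is a partition of E into nonempty sets}. -/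
/-- `H` is a codimension-one subspace of `𝔽ⁿ`. -/
def IsCodimOne {𝔽 : Type*} [Field 𝔽] {n : ℕ} (H : Submodule 𝔽 (Fin n → 𝔽)) : Prop :=
  Module.finrank 𝔽 H + 1 = n

/-- `H` intersects the family `A` transversally: `dim (A_e ⊓ H) = dim A_e − 1` for all `e`. -/
def Transversal {𝔽 : Type*} [Field 𝔽] {n : ℕ} {ι : Type*}
    (A : ι → Submodule 𝔽 (Fin n → 𝔽)) (H : Submodule 𝔽 (Fin n → 𝔽)) : Prop :=
  ∀ e : ι, Module.finrank 𝔽 ↥(A e ⊓ H) + 1 = Module.finrank 𝔽 (A e)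

/-- `H` is regular with respect to the family `A`: it is transversal, and for every
`F ⊆ E` it maximizes `dim ⟨A_e ∩ H : e ∈ F⟩` among all transversal codimension-one
subspaces. -/
def RegularWrt {𝔽 : Type*} [Field 𝔽] {n : ℕ} {ι : Type*} [Fintype ι] [DecidableEq ι]
    (A : ι → Submodule 𝔽 (Fin n → 𝔽)) (H : Submodule 𝔽 (Fin n → 𝔽)) : Prop :=
  IsCodimOne H ∧ Transversal A H ∧
    ∀ F : Finset ι, ∀ H' : Submodule 𝔽 (Fin n → 𝔽), IsCodimOne H' → Transversal A H' →
      Module.finrank 𝔽 ↥(⨆ e ∈ F, (A e ⊓ H')) ≤ Module.finrank 𝔽 ↥(⨆ e ∈ F, (A e ⊓ H))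

/-!
Write `f S = dim ⟨A_e : e ∈ S⟩`, a submodular function of `S`; the right-hand side is its Dilworth
truncation. For every partition, `⟨A_e ∩ H : e ∈ F_i⟩ ≤ ⟨A_e : e ∈ F_i⟩ ∩ H` has dimension at most
`f F_i - 1`, which gives `≤`. Conversely, take `k : E → ℕ` of maximal total weight subject to
`∑_{e ∈ S} k_e + 1 ≤ f S` for all nonempty `S`. By maximality every `e` lies in a tight set, and by
submodularity two intersecting tight sets have a tight union, so the maximal tight sets form a
partition on which the bound is attained. A Rado-type induction, contracting one generic vector of
some `A_e` at a time, yields a subspace `W` of dimension `∑ k_e` spanned by the `A_e ∩ W` and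
containing no `A_e`. A generic hyperplane `H' ≥ W` is transversal, so regularity of `H` gives
`dim ⟨A_e ∩ H⟩ ≥ dim ⟨A_e ∩ H'⟩ ≥ dim W = ∑ k_e`.
-/

open Module Submodule Finset

section Partition
variable {ι : Type*} [DecidableEq ι]

lemma IsPartitionOf.biUnion_eq_s5 {P : Finset (Finset ι)} {F : Finset ι} (hP : IsPartitionOf P F) :
    P.biUnion id = F := by
  rw [← sup_eq_biUnion, hP.2.2]

lemma IsPartitionOf.sum_sum {M : Type*} [AddCommMonoid M] {P : Finset (Finset ι)} {F : Finset ι}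
    (hP : IsPartitionOf P F) (w : ι → M) : ∑ S ∈ P, ∑ e ∈ S, w e = ∑ e ∈ F, w e := by
  rw [← hP.biUnion_eq_s5]
  exact (sum_biUnion fun S hS T hT hST => hP.2.1 S hS T hT hST).symm

/-- The parts are the maximal members of the family. -/
lemma exists_isPartitionOf_of_union_closed [Fintype ι] (p : Finset ι → Prop)
    (hcover : ∀ e, ∃ S, p S ∧ e ∈ S)
    (hunion : ∀ S T, p S → p T → (S ∩ T).Nonempty → p (S ∪ T)) :
    ∃ P, IsPartitionOf P univ ∧ ∀ S ∈ P, p S := by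
  classical
  have hmax : ∀ e, ∃ U, (p U ∧ e ∈ U) ∧ ∀ S, p S → e ∈ S → S ⊆ U := by
    intro e
    obtain ⟨S₀, hS₀⟩ := hcover e
    obtain ⟨U, hU, hUmax⟩ := exists_max_image ({S | p S ∧ e ∈ S} : Finset (Finset ι)) card
      ⟨S₀, by simpa using hS₀⟩
    simp only [mem_filter, mem_univ, true_and] at hU hUmax
    refine ⟨U, hU, fun S hS heS => ?_⟩
    have hSU : p (S ∪ U) := hunion S U hS hU.1 ⟨e, mem_inter.2 ⟨heS, hU.2⟩⟩
    rw [eq_of_subset_of_card_le subset_union_right (hUmax _ ⟨hSU, mem_union_left _ heS⟩)]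
    exact subset_union_left
  choose U hU hUmax using hmax
  refine ⟨univ.image U, ⟨?_, ?_, ?_⟩, ?_⟩
  · simp only [mem_image, mem_univ, true_and, forall_exists_index, forall_apply_eq_imp_iff]
    exact fun e => ⟨e, (hU e).2⟩
  · simp only [mem_image, mem_univ, true_and, forall_exists_index, forall_apply_eq_imp_iff]
    refine fun a b hab => disjoint_left.2 fun x hxa hxb => hab ?_
    have hab : p (U a ∪ U b) := hunion _ _ (hU a).1 (hU b).1 ⟨x, mem_inter.2 ⟨hxa, hxb⟩⟩
    exact Subset.antisymm (subset_union_left.trans (hUmax b _ hab (mem_union_right _ (hU b).2)))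
      (subset_union_right.trans (hUmax a _ hab (mem_union_left _ (hU a).2)))
  · exact eq_univ_of_forall fun e => mem_sup.2 ⟨U e, mem_image_of_mem _ (mem_univ e), (hU e).2⟩
  · simp only [mem_image, mem_univ, true_and, forall_exists_index, forall_apply_eq_imp_iff]
    exact fun e => (hU e).1

end Partition

section Truncation
variable {ι : Type*} [DecidableEq ι]

def IsFeasible (f : Finset ι → ℕ) (k : ι → ℕ) : Prop :=
  ∀ S : Finset ι, S.Nonempty → ∑ e ∈ S, k e + 1 ≤ f S

def IsTight (f : Finset ι → ℕ) (k : ι → ℕ) (S : Finset ι) : Prop :=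
  S.Nonempty ∧ ∑ e ∈ S, k e + 1 = f S

variable {f : Finset ι → ℕ}

lemma sum_add_pi_single (k : ι → ℕ) (e : ι) (S : Finset ι) :
    ∑ x ∈ S, (k + Pi.single e 1 : ι → ℕ) x = ∑ x ∈ S, k x + if e ∈ S then 1 else 0 := by
  simp only [Pi.add_apply, sum_add_distrib, sum_pi_single']

lemma exists_isFeasible_forall_sum_le [Fintype ι] (hf : ∀ S : Finset ι, S.Nonempty → 1 ≤ f S) :
    ∃ k, IsFeasible f k ∧ ∀ k', IsFeasible f k' → ∑ e, k' e ≤ ∑ e, k e := by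
  classical
  set F := (Fintype.piFinset fun e => range (f {e} + 1)).filter (IsFeasible f)
  have hmem : ∀ k, IsFeasible f k → k ∈ F := fun k hk =>
    mem_filter.2 ⟨Fintype.mem_piFinset.2 fun e => mem_range.2 <| by
      have := hk {e} (singleton_nonempty e)
      rw [sum_singleton] at this
      omega, hk⟩
  obtain ⟨k, hkF, hmax⟩ :=
    F.exists_max_image (fun k => ∑ e, k e) ⟨0, hmem 0 fun S hS => by simpa using hf S hS⟩
  exact ⟨k, (mem_filter.1 hkF).2, fun k' hk' => hmax k' (hmem k' hk')⟩

/-- Otherwise `k e` could be raised by one. -/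
lemma IsFeasible.exists_isTight_mem [Fintype ι] {k : ι → ℕ} (hk : IsFeasible f k)
    (hmax : ∀ k', IsFeasible f k' → ∑ e, k' e ≤ ∑ e, k e) (e : ι) :
    ∃ S, IsTight f k S ∧ e ∈ S := by
  by_contra! hslack
  have hk' : IsFeasible f (k + Pi.single e 1) := by
    intro S hS
    rw [sum_add_pi_single]
    split_ifs with heS
    · have hne : ∑ x ∈ S, k x + 1 ≠ f S := fun h => hslack S ⟨hS, h⟩ heS
      have := hk S hS
      omega
    · simpa using hk S hS
  have := hmax _ hk'
  rw [sum_add_pi_single, if_pos (mem_univ e)] at this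
  omega

lemma IsTight.union (hsub : ∀ S T, f (S ∪ T) + f (S ∩ T) ≤ f S + f T) {k : ι → ℕ}
    (hk : IsFeasible f k) {S T : Finset ι} (hS : IsTight f k S) (hT : IsTight f k T)
    (hST : (S ∩ T).Nonempty) : IsTight f k (S ∪ T) := by
  have hne : (S ∪ T).Nonempty := hS.1.mono subset_union_left
  refine ⟨hne, le_antisymm (hk _ hne) ?_⟩
  linarith [hk _ hST, sum_union_inter (s₁ := S) (s₂ := T) (f := k), hsub S T, hS.2, hT.2]

theorem exists_isFeasible_isPartitionOf_isTight [Fintype ι]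
    (hf : ∀ S : Finset ι, S.Nonempty → 1 ≤ f S)
    (hsub : ∀ S T, f (S ∪ T) + f (S ∩ T) ≤ f S + f T) :
    ∃ k, IsFeasible f k ∧ ∃ P, IsPartitionOf P univ ∧ ∀ S ∈ P, IsTight f k S := by
  obtain ⟨k, hk, hmax⟩ := exists_isFeasible_forall_sum_le hf
  exact ⟨k, hk, exists_isPartitionOf_of_union_closed _ (hk.exists_isTight_mem hmax)
    fun S T hS hT => hS.union hsub hk hT⟩

lemma sum_eq_sum_of_isPartitionOf_isTight [Fintype ι] {k : ι → ℕ} {P : Finset (Finset ι)}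
    (hP : IsPartitionOf P univ) (htight : ∀ S ∈ P, IsTight f k S) :
    ∑ S ∈ P, ((f S : ℤ) - 1) = ((∑ e, k e : ℕ) : ℤ) := by
  rw [← hP.sum_sum, Nat.cast_sum]
  refine sum_congr rfl fun S hS => ?_
  rw [← (htight S hS).2]
  push_cast
  ring

end Truncation

section LinearAlgebra
variable {K V : Type*} [Field K] [AddCommGroup V] [Module K V]

lemma finrank_iSup_le_sum [FiniteDimensional K V] {α : Type*} (s : Finset α)
    (U : α → Submodule K V) : finrank K ↥(⨆ a ∈ s, U a) ≤ ∑ a ∈ s, finrank K (U a) := by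
  classical
  induction s using Finset.induction_on with
  | empty => simp
  | insert a s ha ih =>
    rw [Finset.iSup_insert, sum_insert ha]
    exact (finrank_add_le_finrank_add_finrank _ _).trans (by omega)

lemma finrank_inf_add_one_of_not_le [FiniteDimensional K V] {H U : Submodule K V}
    (hH : finrank K H + 1 = finrank K V) (hU : ¬ U ≤ H) :
    finrank K ↥(U ⊓ H) + 1 = finrank K U := by
  have hlt : finrank K H < finrank K ↥(U ⊔ H) :=
    finrank_lt_finrank_of_lt (lt_of_le_of_ne le_sup_right fun h => hU (h ▸ le_sup_left))
  have htop : U ⊔ H = ⊤ := eq_top_of_finrank_eq (by have := finrank_le (U ⊔ H); omega)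
  have := finrank_sup_add_finrank_inf_eq U H
  rw [htop, finrank_top] at this
  omega

lemma finrank_map_add_finrank_inf_ker [FiniteDimensional K V] {V₂ : Type*} [AddCommGroup V₂]
    [Module K V₂] (f : V →ₗ[K] V₂) (U : Submodule K V) :
    finrank K ↥(U.map f) + finrank K ↥(U ⊓ LinearMap.ker f) = finrank K U := by
  rw [← LinearMap.range_domRestrict, ← LinearMap.finrank_range_add_finrank_ker (f.domRestrict U),
    LinearMap.ker_domRestrict, ← map_comap_subtype,
    LinearEquiv.finrank_eq (Submodule.equivMapOfInjective _ U.injective_subtype _).symm]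

lemma finrank_map_mkQ_span_singleton_add_one [FiniteDimensional K V] {v : V} (hv : v ≠ 0)
    {U : Submodule K V} (hvU : v ∈ U) : finrank K ↥(U.map (K ∙ v).mkQ) + 1 = finrank K U := by
  rw [← finrank_map_add_finrank_inf_ker (K ∙ v).mkQ U, ker_mkQ,
    inf_eq_right.2 ((span_singleton_le_iff_mem v U).2 hvU), finrank_span_singleton hv]

lemma finrank_map_mkQ_span_singleton [FiniteDimensional K V] {v : V} {U : Submodule K V}
    (hvU : v ∉ U) : finrank K ↥(U.map (K ∙ v).mkQ) = finrank K U := by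
  rw [← finrank_map_add_finrank_inf_ker (K ∙ v).mkQ U, ker_mkQ,
    (disjoint_span_singleton.2 fun h => absurd h hvU).eq_bot, finrank_bot, add_zero]

lemma exists_hyperplane_ge_forall_not_le [FiniteDimensional K V] [Infinite K] {ι : Type*}
    [Finite ι] {W : Submodule K V} (hW : W ≠ ⊤) {A : ι → Submodule K V}
    (hA : ∀ i, ¬ A i ≤ W) :
    ∃ H : Submodule K V, W ≤ H ∧ finrank K H + 1 = finrank K V ∧ ∀ i, ¬ A i ≤ H := by
  choose a haA haW using fun i => SetLike.not_le_iff_exists.1 (hA i)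
  obtain ⟨b, -, hbW⟩ := SetLike.not_le_iff_exists.1 fun h : ⊤ ≤ W => hW (top_le_iff.1 h)
  obtain ⟨φ, hφ⟩ := Module.exists_dual_forall_apply_ne_zero (K := K)
    (fun o : Option ι => W.mkQ (o.elim b a)) (by
      rintro (_ | i)
      · simpa [Quotient.mk_eq_zero] using hbW
      · simpa [Quotient.mk_eq_zero] using haW i)
  refine ⟨LinearMap.ker (φ ∘ₗ W.mkQ), fun x hx => by simp [(Quotient.mk_eq_zero W).2 hx],
    Dual.finrank_ker_add_one_of_ne_zero fun h => hφ none (by simpa using LinearMap.congr_fun h b),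
    fun i hle => hφ (some i) (hle (haA i))⟩

end LinearAlgebra

section SpanRank
variable {K V : Type*} [Field K] [AddCommGroup V] [Module K V] {ι : Type*}

noncomputable def supFinrank (A : ι → Submodule K V) (S : Finset ι) : ℕ :=
  finrank K ↥(⨆ e ∈ S, A e)

lemma one_le_supFinrank [FiniteDimensional K V] {A : ι → Submodule K V} (hA : ∀ e, A e ≠ ⊥)
    {S : Finset ι} (hS : S.Nonempty) : 1 ≤ supFinrank A S := by
  obtain ⟨e, he⟩ := hS
  exact one_le_finrank_iff.2
    (ne_bot_of_le_ne_bot (hA e) (le_iSup₂ (f := fun e (_ : e ∈ S) => A e) e he))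

lemma supFinrank_union_add_inter_le [FiniteDimensional K V] [DecidableEq ι]
    (A : ι → Submodule K V) (S T : Finset ι) :
    supFinrank A (S ∪ T) + supFinrank A (S ∩ T) ≤ supFinrank A S + supFinrank A T := by
  have hle : (⨆ e ∈ S ∩ T, A e) ≤ (⨆ e ∈ S, A e) ⊓ ⨆ e ∈ T, A e :=
    le_inf (biSup_mono fun _ he => (mem_inter.1 he).1) (biSup_mono fun _ he => (mem_inter.1 he).2)
  have := finrank_sup_add_finrank_inf_eq (⨆ e ∈ S, A e) (⨆ e ∈ T, A e)
  have := finrank_mono hle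
  unfold supFinrank
  rw [Finset.iSup_union]
  omega

theorem finrank_iSup_inf_le_sum_of_isPartitionOf [FiniteDimensional K V] [DecidableEq ι]
    [Fintype ι] {H : Submodule K V} (hH : finrank K H + 1 = finrank K V)
    {A : ι → Submodule K V} (hAH : ∀ e, ¬ A e ≤ H) {Q : Finset (Finset ι)}
    (hQ : IsPartitionOf Q univ) :
    (finrank K ↥(⨆ e, A e ⊓ H) : ℤ) ≤ ∑ S ∈ Q, ((supFinrank A S : ℤ) - 1) := by
  have hpart : ∀ S ∈ Q, finrank K ↥(⨆ e ∈ S, A e ⊓ H) + 1 ≤ supFinrank A S := by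
    intro S hS
    obtain ⟨e, he⟩ := hQ.1 S hS
    have hSH : ¬ (⨆ e ∈ S, A e) ≤ H := fun h =>
      hAH e ((le_iSup₂ (f := fun e (_ : e ∈ S) => A e) e he).trans h)
    have hle : (⨆ e ∈ S, A e ⊓ H) ≤ (⨆ e ∈ S, A e) ⊓ H :=
      le_inf (iSup₂_mono fun _ _ => inf_le_left) (iSup₂_le fun _ _ => inf_le_right)
    have := finrank_inf_add_one_of_not_le hH hSH
    have := finrank_mono hle
    unfold supFinrank
    omega
  have hsplit : (⨆ e, A e ⊓ H) = ⨆ S ∈ Q, ⨆ e ∈ S, A e ⊓ H := by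
    rw [← show ⨆ e ∈ Q.biUnion id, A e ⊓ H = ⨆ S ∈ Q, ⨆ e ∈ S, A e ⊓ H from
      Finset.iSup_biUnion Q id _, hQ.biUnion_eq_s5]
    simp
  calc (finrank K ↥(⨆ e, A e ⊓ H) : ℤ) ≤ ∑ S ∈ Q, (finrank K ↥(⨆ e ∈ S, A e ⊓ H) : ℤ) := by
        rw [hsplit]
        exact_mod_cast finrank_iSup_le_sum Q _
    _ ≤ ∑ S ∈ Q, ((supFinrank A S : ℤ) - 1) :=
        sum_le_sum fun S hS => by have := hpart S hS; omega

end SpanRank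

section Rado
variable {K : Type*} [Field K] {ι : Type*} [DecidableEq ι]

lemma IsFeasible.exists_mem_forall_notMem {V : Type*} [AddCommGroup V] [Module K V] [Infinite K]
    [Fintype ι] {A : ι → Submodule K V} {k : ι → ℕ} (hk : IsFeasible (supFinrank A) k) {e₀ : ι}
    (he₀ : k e₀ ≠ 0) :
    ∃ v ∈ A e₀, v ≠ 0 ∧ ∀ S : Finset ι, e₀ ∉ S → supFinrank A S ≤ ∑ e ∈ S, k e + 1 →
      v ∉ ⨆ e ∈ S, A e := by
  let p : {S : Finset ι // e₀ ∉ S ∧ supFinrank A S ≤ ∑ e ∈ S, k e + 1} → Submodule K (A e₀) :=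
    fun S => (⨆ e ∈ S.1, A e).comap (A e₀).subtype
  have hp : ∀ S, p S ≠ ⊤ := by
    rintro ⟨S, he₀S, hS⟩ htop
    have hle : A e₀ ≤ ⨆ e ∈ S, A e := by simpa [p, comap_subtype_eq_top] using htop
    have := hk (insert e₀ S) (insert_nonempty _ _)
    rw [supFinrank, Finset.iSup_insert, sup_eq_right.2 hle, sum_insert he₀S] at this
    unfold supFinrank at hS
    omega
  obtain ⟨v, hv⟩ := exists_forall_notMem_of_forall_ne_top p hp
  have hempty : (⨆ e ∈ (∅ : Finset ι), A e) = ⊥ := by simp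
  refine ⟨v, v.2, fun h => hv ⟨∅, notMem_empty e₀, ?_⟩ ?_, fun S he₀S hS => hv ⟨S, he₀S, hS⟩⟩
  · rw [supFinrank, hempty, finrank_bot]
    exact Nat.zero_le _
  · simpa [p, hempty] using h

/-- Contracting `v` lowers each `supFinrank A S` by at most one, and not at all on the slackless
sets avoiding `e₀`. -/
lemma IsFeasible.map_mkQ {V : Type*} [AddCommGroup V] [Module K V] [FiniteDimensional K V]
    {A : ι → Submodule K V} {k : ι → ℕ} {e₀ : ι} {v : V}
    (hk : IsFeasible (supFinrank A) (k + Pi.single e₀ 1)) (hv0 : v ≠ 0)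
    (hv : ∀ S : Finset ι, e₀ ∉ S → supFinrank A S ≤ ∑ e ∈ S, (k + Pi.single e₀ 1 : ι → ℕ) e + 1 →
      v ∉ ⨆ e ∈ S, A e) :
    IsFeasible (supFinrank fun e => (A e).map (K ∙ v).mkQ) k := by
  intro S hS
  have hmap : supFinrank (fun e => (A e).map (K ∙ v).mkQ) S =
      finrank K ↥((⨆ e ∈ S, A e).map (K ∙ v).mkQ) := by
    rw [supFinrank, show (⨆ e ∈ S, (A e).map (K ∙ v).mkQ) = (⨆ e ∈ S, A e).map (K ∙ v).mkQ by
      simp only [Submodule.map_iSup]]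
  have hkS := hk S hS
  rw [sum_add_pi_single] at hkS
  rw [hmap]
  by_cases hvS : v ∈ ⨆ e ∈ S, A e
  · have hrank := finrank_map_mkQ_span_singleton_add_one hv0 hvS
    by_cases he₀S : e₀ ∈ S
    · rw [if_pos he₀S] at hkS
      unfold supFinrank at hkS
      omega
    · have := mt (hv S he₀S) (not_not.2 hvS)
      rw [sum_add_pi_single, if_neg he₀S] at this
      rw [if_neg he₀S] at hkS
      unfold supFinrank at hkS this
      omega
  · rw [finrank_map_mkQ_span_singleton hvS]
    unfold supFinrank at hkS
    split_ifs at hkS <;> omega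

theorem IsFeasible.exists_submodule [Infinite K] [Fintype ι] {V : Type*} [AddCommGroup V]
    [Module K V] [FiniteDimensional K V] {A : ι → Submodule K V} {k : ι → ℕ}
    (hk : IsFeasible (supFinrank A) k) :
    ∃ W : Submodule K V, finrank K W = ∑ e, k e ∧ W ≤ ⨆ e, A e ⊓ W ∧ ∀ e, ¬ A e ≤ W := by
  induction hN : ∑ e, k e generalizing V k with
  | zero =>
    refine ⟨⊥, finrank_bot K V, bot_le, fun e he => ?_⟩
    have := hk {e} (singleton_nonempty e)
    rw [supFinrank, Finset.iSup_singleton, le_bot_iff.1 he, finrank_bot] at this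
    omega
  | succ N ih =>
    obtain ⟨e₀, he₀⟩ : ∃ e₀, k e₀ ≠ 0 := by
      by_contra! h
      simp [h] at hN
    obtain ⟨v, hvA, hv0, hv⟩ := hk.exists_mem_forall_notMem he₀
    obtain ⟨k, rfl⟩ : ∃ k', k = k' + Pi.single e₀ 1 := ⟨k - Pi.single e₀ 1, by
      ext e
      by_cases he : e = e₀
      · subst he
        simp only [Pi.add_apply, Pi.sub_apply, Pi.single_eq_same]
        omega
      · simp [he]⟩
    have hsum : ∑ e, k e = N := by
      rw [sum_add_pi_single, if_pos (mem_univ e₀)] at hN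
      omega
    set π := (K ∙ v).mkQ
    obtain ⟨W', hW'rank, hW'span, hW'A⟩ := ih (hk.map_mkQ hv0 hv) hsum
    have hvW : v ∈ W'.comap π := by
      rw [mem_comap, mkQ_apply, (Quotient.mk_eq_zero _).2 (mem_span_singleton_self v)]
      exact W'.zero_mem
    refine ⟨W'.comap π, ?_, ?_, fun e he => hW'A e (map_le_iff_le_comap.2 he)⟩
    · have := finrank_map_mkQ_span_singleton_add_one hv0 hvW
      rw [map_comap_eq_of_surjective (mkQ_surjective _)] at this
      omega
    · calc W'.comap π ≤ (⨆ e, (A e).map π ⊓ W').comap π := comap_mono hW'span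
        _ = ((⨆ e, A e ⊓ W'.comap π).map π).comap π := by
          simp_rw [map_inf_eq_map_inf_comap, Submodule.map_iSup]
        _ = (K ∙ v) ⊔ ⨆ e, A e ⊓ W'.comap π := comap_map_mkQ _ _
        _ ≤ ⨆ e, A e ⊓ W'.comap π := sup_le (le_iSup_of_le e₀ ((span_singleton_le_iff_mem _ _).2
          ⟨hvA, hvW⟩)) le_rfl

end Rado

theorem IsFeasible.sum_le_finrank_iSup_inf_of_regularWrt {𝔽 : Type*} [Field 𝔽] [Infinite 𝔽]
    {n : ℕ} {ι : Type*} [Fintype ι] [DecidableEq ι] {A : ι → Submodule 𝔽 (Fin n → 𝔽)}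
    {H : Submodule 𝔽 (Fin n → 𝔽)} (hH : RegularWrt A H) {k : ι → ℕ}
    (hk : IsFeasible (supFinrank A) k) :
    ∑ e, k e ≤ finrank 𝔽 ↥(⨆ e, A e ⊓ H) := by
  obtain ⟨W, hWrank, hWspan, hWA⟩ := hk.exists_submodule
  have hWtop : W ≠ ⊤ := by
    rcases isEmpty_or_nonempty ι with hι | ⟨⟨e⟩⟩
    · rintro rfl
      have := hH.1
      rw [finrank_top, finrank_fin_fun, univ_eq_empty, sum_empty] at hWrank
      unfold IsCodimOne at this
      omega
    · exact fun h => hWA e (h ▸ le_top)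
  obtain ⟨H', hWH', hH', hAH'⟩ := exists_hyperplane_ge_forall_not_le hWtop hWA
  have hcodim : IsCodimOne H' := by
    unfold IsCodimOne
    rwa [finrank_fin_fun] at hH'
  have htrans : Transversal A H' := fun e => finrank_inf_add_one_of_not_le hH' (hAH' e)
  calc ∑ e, k e = finrank 𝔽 W := hWrank.symm
    _ ≤ finrank 𝔽 ↥(⨆ e, A e ⊓ H') :=
      finrank_mono (hWspan.trans (iSup_mono fun e => inf_le_inf_left _ hWH'))
    _ ≤ finrank 𝔽 ↥(⨆ e, A e ⊓ H) := by
      have huniv (U : Submodule 𝔽 (Fin n → 𝔽)) : (⨆ e ∈ univ, A e ⊓ U) = ⨆ e, A e ⊓ U := by simp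
      rw [← huniv, ← huniv]
      exact hH.2.2 univ H' hcodim htrans

/-- For `𝔽 ∈ {ℝ, ℂ}`, a finite family of nonzero subspaces `A_e ⊆ 𝔽ⁿ`
and a codimension-one subspace `H` regular with respect to the family,
`dim ⟨A_e ∩ H : e ∈ E⟩ = min {∑ᵢ (dim ⟨A_e : e ∈ Fᵢ⟩ − 1) : {F₁,…,Fₜ} a partition of E}`. -/
theorem stmt5 {𝔽 : Type*} [RCLike 𝔽] {n : ℕ} {ι : Type*} [Fintype ι] [DecidableEq ι]
    (A : ι → Submodule 𝔽 (Fin n → 𝔽)) (hA : ∀ e, A e ≠ ⊥)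
    (H : Submodule 𝔽 (Fin n → 𝔽)) (hH : RegularWrt A H) :
    (Module.finrank 𝔽 ↥(⨆ e : ι, (A e ⊓ H)) : ℤ) =
      sInf {s : ℤ | ∃ Q : Finset (Finset ι), IsPartitionOf Q Finset.univ ∧
        s = ∑ S ∈ Q, ((Module.finrank 𝔽 ↥(⨆ e ∈ S, A e) : ℤ) - 1)} := by
  have hAH : ∀ e, ¬ A e ≤ H := fun e hle => by
    have := hH.2.1 e
    rw [inf_eq_left.2 hle] at this
    omega
  have hH₁ : finrank 𝔽 H + 1 = finrank 𝔽 (Fin n → 𝔽) := by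
    rw [finrank_fin_fun]
    exact hH.1
  have hupper := fun Q (hQ : IsPartitionOf Q univ) =>
    finrank_iSup_inf_le_sum_of_isPartitionOf hH₁ hAH hQ
  obtain ⟨k, hk, P, hP, hPtight⟩ := exists_isFeasible_isPartitionOf_isTight
    (fun S => one_le_supFinrank hA) (supFinrank_union_add_inter_le A)
  have hlower := hk.sum_le_finrank_iSup_inf_of_regularWrt hH
  refine (IsLeast.csInf_eq ⟨?_, ?_⟩).symm
  · exact ⟨P, hP, le_antisymm (hupper P hP)
      ((sum_eq_sum_of_isPartitionOf_isTight hP hPtight).trans_le (Nat.cast_le.2 hlower))⟩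
  · rintro _ ⟨Q, hQ, rfl⟩
    exact hupper Q hQ
end

section
/- Let d ≥ 2 and 1 ≤ k < d be integers, let L_1, …, L_d ⊆ ℂ^m be linear subspaces, and let x_i ∈ L_i for each i ∈ [d]. Let T_a = Σ_{j=1}^k ( ∗_{i∈[k], i≠j} x_i ) ∗ L_j and T_b = Σ_{j=k+1}^d ( ∗_{i∈[d]∖[k], i≠j} x_i ) ∗ L_j. Let F ⊆ [m] be nonempty and suppose the restriction of x_1 ∗ ⋯ ∗ x_d to the coordinates in F is nonzero. Then the dimension of the image under the coordinate projection π_F onto ℂ^F of the subspace ( ∗_{i=k+1}^d x_i ) ∗ T_a + ( ∗_{i=1}^k x_i ) ∗ T_b is at most dim π_F(T_a) + dim π_F(T_b) − 1. (Consequently, the algebraic matroid of L_1 ∗ ⋯ ∗ L_d is bounded above in the weak order by the matroid induced by r_a + r_b − 1, where r_a and r_b are the rank functions of the algebraic matroids of L_1 ∗ ⋯ ∗ L_k and L_{k+1} ∗ ⋯ ∗ L_d.) -/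
/-- Coordinatewise (Hadamard) multiplication by the vector `v`, as a linear map;
`v ∗ U` is the image of the subspace `U` under this map. -/
noncomputable def hadMul {m : ℕ} (v : Fin m → ℂ) : (Fin m → ℂ) →ₗ[ℂ] (Fin m → ℂ) :=
  (Matrix.diagonal v).mulVecLin

/-- The coordinate projection `π_F : ℂ^m → ℂ^F`. -/
noncomputable def coordProj {m : ℕ} (F : Finset (Fin m)) :
    (Fin m → ℂ) →ₗ[ℂ] ({a // a ∈ F} → ℂ) :=
  LinearMap.funLeft ℂ ℂ (↑)

lemma hadMul_apply {m : ℕ} (v u : Fin m → ℂ) (c : Fin m) :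
    hadMul v u c = v c * u c := by
  simp [hadMul, Matrix.mulVecLin_apply, Matrix.mulVec_diagonal]

/-- projection commutes with hadamard multiplication -/
lemma proj_comp_hadMul {m : ℕ} (F : Finset (Fin m)) (v : Fin m → ℂ) :
    (coordProj F).comp (hadMul v) =
      ((Matrix.diagonal (fun a : {a // a ∈ F} => v a)).mulVecLin).comp (coordProj F) := by
  ext u a
  simp [coordProj, hadMul_apply, Matrix.mulVecLin_apply, Matrix.mulVec_diagonal,
    LinearMap.funLeft]

lemma finrank_proj_hadMul_le {m : ℕ} (F : Finset (Fin m)) (v : Fin m → ℂ)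
    (T : Submodule ℂ (Fin m → ℂ)) :
    Module.finrank ℂ ↥((T.map (hadMul v)).map (coordProj F)) ≤
      Module.finrank ℂ ↥(T.map (coordProj F)) := by
  rw [← Submodule.map_comp, proj_comp_hadMul, Submodule.map_comp]
  exact Submodule.finrank_map_le _ _


/-- Let `2 ≤ d`, `1 ≤ k < d`, let `L₁,…,L_d ⊆ ℂ^m` be subspaces with
`xᵢ ∈ Lᵢ`, and let `T_a = ∑_{j≤k} (∗_{i≤k, i≠j} xᵢ) ∗ L_j`,
`T_b = ∑_{j>k} (∗_{i>k, i≠j} xᵢ) ∗ L_j`.  If the restriction of `x₁ ∗ ⋯ ∗ x_d` to a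
nonempty `F ⊆ [m]` is nonzero, then
`dim π_F ((∗_{i>k} xᵢ) ∗ T_a + (∗_{i≤k} xᵢ) ∗ T_b) ≤ dim π_F(T_a) + dim π_F(T_b) − 1`. -/
theorem stmt9 {d k m : ℕ} (hd : 2 ≤ d) (hk1 : 1 ≤ k) (hkd : k < d)
    (L : Fin d → Submodule ℂ (Fin m → ℂ)) (x : Fin d → (Fin m → ℂ))
    (hx : ∀ i, x i ∈ L i)
    (Ta Tb : Submodule ℂ (Fin m → ℂ))
    (hTa : Ta = ⨆ j ∈ Finset.univ.filter (fun j : Fin d => (j : ℕ) < k),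
      (L j).map (hadMul (fun c =>
        ∏ i ∈ (Finset.univ.filter (fun i : Fin d => (i : ℕ) < k)).erase j, x i c)))
    (hTb : Tb = ⨆ j ∈ Finset.univ.filter (fun j : Fin d => k ≤ (j : ℕ)),
      (L j).map (hadMul (fun c =>
        ∏ i ∈ (Finset.univ.filter (fun i : Fin d => k ≤ (i : ℕ))).erase j, x i c)))
    (F : Finset (Fin m)) (hF : F.Nonempty)
    (hnz : ∃ j ∈ F, ∏ i, x i j ≠ 0) :
    (Module.finrank ℂ
        ↥((Ta.map (hadMul (fun c => ∏ i ∈ Finset.univ.filter (fun i : Fin d => k ≤ (i : ℕ)), x i c))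
            ⊔ Tb.map (hadMul (fun c => ∏ i ∈ Finset.univ.filter (fun i : Fin d => (i : ℕ) < k), x i c))).map
          (coordProj F)) : ℤ) ≤
      (Module.finrank ℂ ↥(Ta.map (coordProj F)) : ℤ) +
        (Module.finrank ℂ ↥(Tb.map (coordProj F)) : ℤ) - 1 := by
  classical
  set p : Fin m → ℂ := fun c => ∏ i ∈ Finset.univ.filter (fun i : Fin d => (i : ℕ) < k), x i c
  set q : Fin m → ℂ := fun c => ∏ i ∈ Finset.univ.filter (fun i : Fin d => k ≤ (i : ℕ)), x i c
  -- p ∈ Ta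
  have hpTa : p ∈ Ta := by
    have hj0 : (⟨0, lt_of_lt_of_le (Nat.lt_of_lt_of_le Nat.zero_lt_one hk1) hkd.le⟩ : Fin d) ∈
        Finset.univ.filter (fun j : Fin d => (j : ℕ) < k) := by
      simp; omega
    set j0 : Fin d := ⟨0, lt_of_lt_of_le (Nat.lt_of_lt_of_le Nat.zero_lt_one hk1) hkd.le⟩
    have hmem : hadMul (fun c =>
        ∏ i ∈ (Finset.univ.filter (fun i : Fin d => (i : ℕ) < k)).erase j0, x i c) (x j0) ∈
        (L j0).map (hadMul (fun c =>
          ∏ i ∈ (Finset.univ.filter (fun i : Fin d => (i : ℕ) < k)).erase j0, x i c)) :=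
      Submodule.mem_map_of_mem (hx j0)
    have hle := le_iSup₂ (f := fun j (_ : j ∈ Finset.univ.filter (fun j : Fin d => (j : ℕ) < k)) =>
      (L j).map (hadMul (fun c =>
        ∏ i ∈ (Finset.univ.filter (fun i : Fin d => (i : ℕ) < k)).erase j, x i c))) j0 hj0
    rw [hTa]
    refine hle ?_
    convert hmem using 1
    funext c
    rw [hadMul_apply]
    exact (Finset.prod_erase_mul _ _ hj0).symm
  -- q ∈ Tb
  have hqTb : q ∈ Tb := by
    have hj0 : (⟨k, hkd⟩ : Fin d) ∈ Finset.univ.filter (fun j : Fin d => k ≤ (j : ℕ)) := by simp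
    set j0 : Fin d := ⟨k, hkd⟩
    have hmem : hadMul (fun c =>
        ∏ i ∈ (Finset.univ.filter (fun i : Fin d => k ≤ (i : ℕ))).erase j0, x i c) (x j0) ∈
        (L j0).map (hadMul (fun c =>
          ∏ i ∈ (Finset.univ.filter (fun i : Fin d => k ≤ (i : ℕ))).erase j0, x i c)) :=
      Submodule.mem_map_of_mem (hx j0)
    have hle := le_iSup₂ (f := fun j (_ : j ∈ Finset.univ.filter (fun j : Fin d => k ≤ (j : ℕ))) =>
      (L j).map (hadMul (fun c =>
        ∏ i ∈ (Finset.univ.filter (fun i : Fin d => k ≤ (i : ℕ))).erase j, x i c))) j0 hj0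
    rw [hTb]
    refine hle ?_
    convert hmem using 1
    funext c
    rw [hadMul_apply]
    exact (Finset.prod_erase_mul _ _ hj0).symm
  set A := (Ta.map (hadMul q)).map (coordProj F)
  set B := (Tb.map (hadMul p)).map (coordProj F)
  -- the common nonzero vector
  obtain ⟨j, hjF, hj⟩ := hnz
  have hy : (fun c => p c * q c) = fun c => ∏ i, x i c := by
    funext c
    simpa using Finset.prod_filter_mul_prod_filter_not Finset.univ
      (fun i : Fin d => (i : ℕ) < k) (fun i => x i c)
  have hyA : coordProj F (fun c => p c * q c) ∈ A :=
    Submodule.mem_map_of_mem (by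
      have : hadMul q p ∈ Ta.map (hadMul q) := Submodule.mem_map_of_mem hpTa
      convert this using 1
      funext c; rw [hadMul_apply]; ring)
  have hyB : coordProj F (fun c => p c * q c) ∈ B :=
    Submodule.mem_map_of_mem (by
      have : hadMul p q ∈ Tb.map (hadMul p) := Submodule.mem_map_of_mem hqTb
      convert this using 1
      funext c; rw [hadMul_apply])
  have hyne : coordProj F (fun c => p c * q c) ≠ 0 := by
    intro h
    have := congrFun h ⟨j, hjF⟩
    rw [hy] at this
    simp [coordProj, LinearMap.funLeft] at this
    exact hj this
  have hinf : 1 ≤ Module.finrank ℂ ↥(A ⊓ B) := by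
    rw [Nat.one_le_iff_ne_zero]
    intro h0
    have : A ⊓ B = ⊥ := Submodule.finrank_eq_zero.mp h0
    have hmem : coordProj F (fun c => p c * q c) ∈ A ⊓ B := ⟨hyA, hyB⟩
    rw [this, Submodule.mem_bot] at hmem
    exact hyne hmem
  have hsum := Submodule.finrank_sup_add_finrank_inf_eq A B
  have hA : Module.finrank ℂ ↥A ≤ Module.finrank ℂ ↥(Ta.map (coordProj F)) :=
    finrank_proj_hadMul_le F q Ta
  have hB : Module.finrank ℂ ↥B ≤ Module.finrank ℂ ↥(Tb.map (coordProj F)) :=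
    finrank_proj_hadMul_le F p Tb
  have hmain : ((Ta.map (hadMul q)) ⊔ (Tb.map (hadMul p))).map (coordProj F) = A ⊔ B :=
    Submodule.map_sup _ _ _
  rw [hmain]
  have := hsum
  omega
end

section
/- Let G = (V, E) be a finite graph such that (i) |I| ≤ 3|V(I)| − 4 for all nonempty I ⊆ E, |E| = 3|V| − 4, and V(E) = V (i.e. G is (3,4)-tight), and (ii) G contains no spanning (2,3)-tight subgraph, i.e. there is no F ⊆ E with V(F) = V, |F| = 2|V| − 3, and |I| ≤ 2|V(I)| − 3 for all nonempty I ⊆ F. Then the rank of the matroid induced by c_{2,3}^MD + c_{1,0}^MD − 1 is at most 3|V| − 5, which is strictly smaller than the rank 3|V| − 4 of the (3,4)-count matroid of G. -/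
/-- `V(F)`: the set of vertices incident to some edge of `F`. -/
def VF {V : Type*} [Fintype V] [DecidableEq V] (F : Finset (Sym2 V)) : Finset V :=
  Finset.univ.filter fun v => ∃ e ∈ F, v ∈ e

/-- The count function `c_{k,ℓ}(F) = k·|V(F)| − ℓ`. -/
def countFn {V : Type*} [Fintype V] [DecidableEq V] (k ℓ : ℤ) (F : Finset (Sym2 V)) : ℤ :=
  k * (VF F).card - ℓ

section Helpers

variable {V : Type*} [Fintype V] [DecidableEq V]

lemma VF_mono {F F' : Finset (Sym2 V)} (h : F ⊆ F') : VF F ⊆ VF F' := by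
  intro v hv
  simp only [VF, Finset.mem_filter] at *
  obtain ⟨-, e, he, hve⟩ := hv
  exact ⟨Finset.mem_univ v, e, h he, hve⟩

lemma VF_union (A B : Finset (Sym2 V)) : VF (A ∪ B) = VF A ∪ VF B := by
  ext v
  simp only [VF, Finset.mem_filter, Finset.mem_union, Finset.mem_univ, true_and]
  constructor
  · rintro ⟨e, he | he, hv⟩
    · exact Or.inl ⟨e, he, hv⟩
    · exact Or.inr ⟨e, he, hv⟩
  · rintro (⟨e, he, hv⟩ | ⟨e, he, hv⟩)
    · exact ⟨e, Or.inl he, hv⟩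
    · exact ⟨e, Or.inr he, hv⟩

lemma VF_inter_subset (A B : Finset (Sym2 V)) : VF (A ∩ B) ⊆ VF A ∩ VF B := by
  intro v hv
  exact Finset.mem_inter.2 ⟨VF_mono Finset.inter_subset_left hv,
    VF_mono Finset.inter_subset_right hv⟩

lemma VF_submod (A B : Finset (Sym2 V)) :
    ((VF (A ∪ B)).card : ℤ) + (VF (A ∩ B)).card ≤ (VF A).card + (VF B).card := by
  have h1 : (VF (A ∪ B)).card + (VF (A ∩ B)).card ≤ (VF A).card + (VF B).card := by
    rw [VF_union]
    calc (VF A ∪ VF B).card + (VF (A ∩ B)).card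
        ≤ (VF A ∪ VF B).card + (VF A ∩ VF B).card :=
          Nat.add_le_add_left (Finset.card_le_card (VF_inter_subset A B)) _
      _ = (VF A).card + (VF B).card := Finset.card_union_add_card_inter _ _
  exact_mod_cast h1

lemma two_le_card_VF {G : SimpleGraph V} [DecidableRel G.Adj] {S : Finset (Sym2 V)}
    (hS : S ⊆ G.edgeFinset) (hne : S.Nonempty) : 2 ≤ (VF S).card := by
  obtain ⟨e, he⟩ := hne
  induction e using Sym2.inductionOn with
  | hf u v =>
    have hadj : G.Adj u v := by
      have := hS he
      rwa [SimpleGraph.mem_edgeFinset, SimpleGraph.mem_edgeSet] at this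
    have hsub : ({u, v} : Finset V) ⊆ VF S := by
      intro x hx
      simp only [Finset.mem_insert, Finset.mem_singleton] at hx
      simp only [VF, Finset.mem_filter, Finset.mem_univ, true_and]
      exact ⟨s(u, v), he, by rcases hx with rfl | rfl <;> simp⟩
    calc 2 = ({u, v} : Finset V).card := (Finset.card_pair hadj.ne).symm
      _ ≤ _ := Finset.card_le_card hsub

lemma card_VF_single {u v : V} (huv : u ≠ v) : (VF ({s(u,v)} : Finset (Sym2 V))).card = 2 := by
  have h : VF ({s(u,v)} : Finset (Sym2 V)) = {u, v} := by
    ext x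
    simp [VF, Sym2.mem_iff]
  rw [h, Finset.card_pair huv]

lemma one_le_c23 {G : SimpleGraph V} [DecidableRel G.Adj] {S : Finset (Sym2 V)}
    (hS : S ⊆ G.edgeFinset) (hne : S.Nonempty) : 1 ≤ countFn 2 3 S := by
  have h := two_le_card_VF hS hne
  unfold countFn
  omega

lemma c23_mono {A B : Finset (Sym2 V)} (h : A ⊆ B) : countFn 2 3 A ≤ countFn 2 3 B := by
  have := Finset.card_le_card (VF_mono h)
  unfold countFn
  omega

lemma minDilworth_bddBelow {α : Type*} [DecidableEq α] (f : Finset α → ℤ) (F : Finset α)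
    (hf : ∀ S : Finset α, S.Nonempty → S ⊆ F → 0 ≤ f S) :
    BddBelow {s : ℤ | ∃ F₀ ⊆ F, ∃ P : Finset (Finset α),
      IsPartitionOf P (F \ F₀) ∧ s = (F₀.card : ℤ) + ∑ S ∈ P, f S} := by
  refine ⟨0, ?_⟩
  rintro s ⟨F₀, hF₀, P, ⟨hne, hdisj, hsup⟩, rfl⟩
  have hsum : 0 ≤ ∑ S ∈ P, f S := by
    refine Finset.sum_nonneg fun S hS => hf S (hne S hS) ?_
    have h1 : S ⊆ P.sup id := Finset.le_sup (f := id) hS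
    rw [hsup] at h1
    exact h1.trans (Finset.sdiff_subset)
  positivity

lemma minDilworth_le {α : Type*} [DecidableEq α] {f : Finset α → ℤ} {F F₀ : Finset α}
    {P : Finset (Finset α)}
    (hf : ∀ S : Finset α, S.Nonempty → S ⊆ F → 0 ≤ f S)
    (hF₀ : F₀ ⊆ F) (hP : IsPartitionOf P (F \ F₀)) :
    minDilworth f F ≤ (F₀.card : ℤ) + ∑ S ∈ P, f S :=
  csInf_le (minDilworth_bddBelow f F hf) ⟨F₀, hF₀, P, hP, rfl⟩

/-- Key lemma: there is a (2,3)-sparse subset of `E` of size at least the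
Dilworth truncation value. -/
lemma exists_sparse_ge (G : SimpleGraph V) [DecidableRel G.Adj] :
    ∃ I ⊆ G.edgeFinset, (∀ J ⊆ I, J.Nonempty → (J.card : ℤ) ≤ countFn 2 3 J) ∧
      minDilworth (countFn 2 3) G.edgeFinset ≤ I.card := by
  classical
  set E := G.edgeFinset with hE
  set Spar : Finset (Sym2 V) → Prop :=
    fun I => ∀ J ⊆ I, J.Nonempty → (J.card : ℤ) ≤ countFn 2 3 J with hSpar
  have hsparempty : Spar ∅ := by
    intro J hJ hne
    rw [Finset.subset_empty] at hJ
    exact absurd hJ hne.ne_empty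
  obtain ⟨I, hIS, hImax⟩ :=
    (E.powerset.filter Spar).exists_max_image Finset.card
      ⟨∅, Finset.mem_filter.2 ⟨Finset.mem_powerset.2 (Finset.empty_subset _), hsparempty⟩⟩
  obtain ⟨hIE', hIsp⟩ := Finset.mem_filter.1 hIS
  have hIE : I ⊆ E := Finset.mem_powerset.1 hIE'
  refine ⟨I, hIE, hIsp, ?_⟩
  -- tight sets
  set Tight : Finset (Sym2 V) → Prop :=
    fun T => T ⊆ E ∧ T.Nonempty ∧ ((I ∩ T).card : ℤ) = countFn 2 3 T with hTight
  -- sparse bound relative to I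
  have hIbound : ∀ T, T ⊆ E → T.Nonempty → ((I ∩ T).card : ℤ) ≤ countFn 2 3 T := by
    intro T hTE hTne
    rcases (I ∩ T).eq_empty_or_nonempty with h | h
    · rw [h]
      have := one_le_c23 (G := G) hTE hTne
      simp only [Finset.card_empty, Nat.cast_zero]
      omega
    · calc ((I ∩ T).card : ℤ) ≤ countFn 2 3 (I ∩ T) :=
            hIsp _ Finset.inter_subset_left h
        _ ≤ countFn 2 3 T := c23_mono Finset.inter_subset_right
  -- every edge outside I lies in a tight set
  have hstep : ∀ e ∈ E, e ∉ I → ∃ T, Tight T ∧ e ∈ T := by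
    intro e he heI
    have h2 : insert e I ⊆ E := Finset.insert_subset he hIE
    have h3 : ¬ Spar (insert e I) := by
      intro hsp
      have hmem : insert e I ∈ E.powerset.filter Spar :=
        Finset.mem_filter.2 ⟨Finset.mem_powerset.2 h2, hsp⟩
      have := hImax _ hmem
      rw [Finset.card_insert_of_notMem heI] at this
      omega
    obtain ⟨J, hJsub, hJne, hJc⟩ :
        ∃ J, J ⊆ insert e I ∧ J.Nonempty ∧ ¬ ((J.card : ℤ) ≤ countFn 2 3 J) := by
      by_contra hc
      push_neg at hc
      exact h3 fun J hJ hne => hc J hJ hne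
    have heJ : e ∈ J := by
      by_contra h
      have hJI : J ⊆ I := fun x hx => (Finset.mem_insert.1 (hJsub hx)).resolve_left
        (fun hxe => h (hxe ▸ hx))
      exact hJc (hIsp J hJI hJne)
    have hJE : J ⊆ E := hJsub.trans h2
    have hJeI : J.erase e ⊆ I := by
      intro x hx
      obtain ⟨hxe, hxJ⟩ := Finset.mem_erase.1 hx
      exact (Finset.mem_insert.1 (hJsub hxJ)).resolve_left hxe
    have hJene : (J.erase e).Nonempty := by
      rcases Finset.eq_empty_or_nonempty (J.erase e) with h | h
      · exfalso
        have hJsing : J = {e} := by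
          have := (Finset.erase_eq_empty_iff J e).1 h
          rcases this with h' | h'
          · exact absurd h' hJne.ne_empty
          · exact h'
        subst hJsing
        obtain ⟨u, v, huv, rfl⟩ : ∃ u v : V, u ≠ v ∧ e = s(u,v) := by
          have hadj := (SimpleGraph.mem_edgeFinset.1 (hJE (Finset.mem_singleton_self e)))
          induction e using Sym2.inductionOn with
          | hf u v => exact ⟨u, v, (G.mem_edgeSet.mp hadj).ne, rfl⟩
        have h1 : countFn 2 3 ({s(u,v)} : Finset (Sym2 V)) = 1 := by
          unfold countFn
          rw [card_VF_single huv]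
          norm_num
        rw [h1] at hJc
        simp at hJc
      · exact h
    have hIJ : I ∩ J = J.erase e := by
      ext x
      simp only [Finset.mem_inter, Finset.mem_erase]
      constructor
      · rintro ⟨hxI, hxJ⟩
        exact ⟨fun hxe => heI (hxe ▸ hxI), hxJ⟩
      · rintro ⟨hxe, hxJ⟩
        exact ⟨(Finset.mem_insert.1 (hJsub hxJ)).resolve_left hxe, hxJ⟩
    have hcount : ((J.erase e).card : ℤ) ≤ countFn 2 3 (J.erase e) := hIsp _ hJeI hJene
    have hmono : countFn 2 3 (J.erase e) ≤ countFn 2 3 J := c23_mono (Finset.erase_subset _ _)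
    have hcarderase : (J.erase e).card = J.card - 1 := Finset.card_erase_of_mem heJ
    have hJcard : 1 ≤ J.card := Finset.card_pos.2 hJne
    refine ⟨J, ⟨hJE, hJne, ?_⟩, heJ⟩
    rw [hIJ, hcarderase]
    push_cast [hJcard]
    omega
  -- union of intersecting tight sets is tight
  have htub : ∀ T₁ T₂, Tight T₁ → Tight T₂ → ¬ Disjoint T₁ T₂ → Tight (T₁ ∪ T₂) := by
    rintro T₁ T₂ ⟨h1E, h1ne, h1eq⟩ ⟨h2E, h2ne, h2eq⟩ hndisj
    have hint : (T₁ ∩ T₂).Nonempty := Finset.not_disjoint_iff_nonempty_inter.1 hndisj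
    have hintE : T₁ ∩ T₂ ⊆ E := Finset.inter_subset_left.trans h1E
    have hunE : T₁ ∪ T₂ ⊆ E := Finset.union_subset h1E h2E
    have hIi : ((I ∩ (T₁ ∩ T₂)).card : ℤ) ≤ countFn 2 3 (T₁ ∩ T₂) := hIbound _ hintE hint
    have hIu : ((I ∩ (T₁ ∪ T₂)).card : ℤ) ≤ countFn 2 3 (T₁ ∪ T₂) :=
      hIbound _ hunE (h1ne.mono Finset.subset_union_left)
    have hsub : countFn 2 3 (T₁ ∪ T₂) + countFn 2 3 (T₁ ∩ T₂) ≤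
        countFn 2 3 T₁ + countFn 2 3 T₂ := by
      have := VF_submod T₁ T₂
      unfold countFn
      omega
    have hcards : (I ∩ (T₁ ∪ T₂)).card + (I ∩ (T₁ ∩ T₂)).card
        = (I ∩ T₁).card + (I ∩ T₂).card := by
      rw [Finset.inter_union_distrib_left, show I ∩ (T₁ ∩ T₂) = (I ∩ T₁) ∩ (I ∩ T₂) by
        rw [Finset.inter_inter_distrib_left]]
      exact Finset.card_union_add_card_inter _ _
    refine ⟨hunE, h1ne.mono Finset.subset_union_left, ?_⟩
    have hcards' : ((I ∩ (T₁ ∪ T₂)).card : ℤ) + (I ∩ (T₁ ∩ T₂)).card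
        = (I ∩ T₁).card + (I ∩ T₂).card := by exact_mod_cast hcards
    omega
  -- every tight set is in a maximal tight set
  have hmaxt : ∀ T, Tight T → ∃ T', Tight T' ∧ T ⊆ T' ∧
      ∀ T'', Tight T'' → T' ⊆ T'' → T' = T'' := by
    intro T hT
    obtain ⟨T', hT'C, hmax⟩ :=
      (E.powerset.filter (fun T' => Tight T' ∧ T ⊆ T')).exists_max_image Finset.card
        ⟨T, Finset.mem_filter.2 ⟨Finset.mem_powerset.2 hT.1, hT, Finset.Subset.refl T⟩⟩
    obtain ⟨hT'E, hT't, hTT'⟩ := Finset.mem_filter.1 hT'C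
    refine ⟨T', hT't, hTT', fun T'' hT''t hsub => ?_⟩
    have hmem : T'' ∈ E.powerset.filter (fun T' => Tight T' ∧ T ⊆ T') :=
      Finset.mem_filter.2 ⟨Finset.mem_powerset.2 hT''t.1, hT''t, hTT'.trans hsub⟩
    exact Finset.eq_of_subset_of_card_le hsub (hmax _ hmem)
  -- the finset of maximal tight sets
  set M : Finset (Finset (Sym2 V)) :=
    E.powerset.filter (fun T => Tight T ∧ ∀ T'', Tight T'' → T ⊆ T'' → T = T'') with hM
  have hMtight : ∀ T ∈ M, Tight T := fun T hT => (Finset.mem_filter.1 hT).2.1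
  have hMmax : ∀ T ∈ M, ∀ T'', Tight T'' → T ⊆ T'' → T = T'' :=
    fun T hT => (Finset.mem_filter.1 hT).2.2
  have hMdisj : ∀ T₁ ∈ M, ∀ T₂ ∈ M, T₁ ≠ T₂ → Disjoint T₁ T₂ := by
    intro T₁ h1 T₂ h2 hne
    by_contra hnd
    have hu := htub T₁ T₂ (hMtight _ h1) (hMtight _ h2) hnd
    have e1 := hMmax _ h1 _ hu Finset.subset_union_left
    have e2 := hMmax _ h2 _ hu Finset.subset_union_right
    exact hne (e1.trans e2.symm)
  set U : Finset (Sym2 V) := M.sup id with hU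
  have hUE : U ⊆ E := Finset.sup_le fun T hT => (hMtight T hT).1
  have hcover : ∀ e ∈ E, e ∉ I → e ∈ U := by
    intro e he heI
    obtain ⟨T, hT, heT⟩ := hstep e he heI
    obtain ⟨T', hT't, hTT', hT'max⟩ := hmaxt T hT
    have hT'M : T' ∈ M :=
      Finset.mem_filter.2 ⟨Finset.mem_powerset.2 hT't.1, hT't, hT'max⟩
    exact (Finset.le_sup (f := id) hT'M : T' ⊆ U) (hTT' heT)
  set F₀ : Finset (Sym2 V) := E \ U with hF₀
  have hF₀I : F₀ ⊆ I := by
    intro x hx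
    obtain ⟨hxE, hxU⟩ := Finset.mem_sdiff.1 hx
    by_contra hxI
    exact hxU (hcover x hxE hxI)
  have hEdiff : E \ F₀ = U := by
    rw [hF₀, sdiff_sdiff_eq_self hUE]
  have hpart : IsPartitionOf M (E \ F₀) := by
    refine ⟨fun T hT => (hMtight T hT).2.1, hMdisj, ?_⟩
    rw [hEdiff]
  -- value computation
  have hvalue : (F₀.card : ℤ) + ∑ T ∈ M, countFn 2 3 T = I.card := by
    have h1 : ∑ T ∈ M, countFn 2 3 T = ∑ T ∈ M, ((I ∩ T).card : ℤ) :=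
      Finset.sum_congr rfl fun T hT => ((hMtight T hT).2.2).symm
    have h2 : (M.biUnion fun T => I ∩ T).card = ∑ T ∈ M, (I ∩ T).card :=
      Finset.card_biUnion fun T₁ h1' T₂ h2' hne =>
        (hMdisj T₁ h1' T₂ h2' hne).mono Finset.inter_subset_right Finset.inter_subset_right
    have h3 : M.biUnion (fun T => I ∩ T) = I ∩ U := by
      rw [hU, Finset.sup_eq_biUnion]
      ext x
      simp only [Finset.mem_biUnion, Finset.mem_inter, id]
      constructor
      · rintro ⟨T, hT, hxI, hxT⟩
        exact ⟨hxI, T, hT, hxT⟩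
      · rintro ⟨hxI, T, hT, hxT⟩
        exact ⟨T, hT, hxI, hxT⟩
    have h4 : I = F₀ ∪ (I ∩ U) := by
      ext x
      simp only [Finset.mem_union, Finset.mem_inter]
      constructor
      · intro hxI
        by_cases hxU : x ∈ U
        · exact Or.inr ⟨hxI, hxU⟩
        · exact Or.inl (Finset.mem_sdiff.2 ⟨hIE hxI, hxU⟩)
      · rintro (hx | ⟨hx, -⟩)
        · exact hF₀I hx
        · exact hx
    have h5 : Disjoint F₀ (I ∩ U) :=
      (Finset.sdiff_disjoint).mono_right Finset.inter_subset_right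
    have h6 : I.card = F₀.card + (I ∩ U).card := by
      conv_lhs => rw [h4]
      exact Finset.card_union_of_disjoint h5
    have h7 : (∑ T ∈ M, ((I ∩ T).card : ℤ)) = ((I ∩ U).card : ℤ) := by
      rw [← h3]
      exact_mod_cast h2.symm
    rw [h1, h7]
    omega
  calc minDilworth (countFn 2 3) E ≤ (F₀.card : ℤ) + ∑ T ∈ M, countFn 2 3 T :=
        minDilworth_le (fun S hne hSE => by
          have := one_le_c23 (G := G) hSE hne
          omega) Finset.sdiff_subset hpart
    _ = I.card := hvalue

end Helpers

/-- Let `G` be a `(3,4)`-tight graph with no spanning `(2,3)`-tight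
subgraph.  Then the rank of the matroid induced by `c₂,₃^MD + c₁,₀^MD − 1` is at most
`3|V| − 5`, which is strictly smaller than the rank `3|V| − 4` of the `(3,4)`-count
matroid of `G`. -/
theorem stmt12 {V : Type*} [Fintype V] [DecidableEq V]
    (G : SimpleGraph V) [DecidableRel G.Adj]
    (htight : (∀ I ⊆ G.edgeFinset, I.Nonempty → (I.card : ℤ) ≤ 3 * (VF I).card - 4) ∧
      (G.edgeFinset.card : ℤ) = 3 * Fintype.card V - 4 ∧ VF G.edgeFinset = Finset.univ)
    (hnospanning : ¬ ∃ F ⊆ G.edgeFinset, VF F = Finset.univ ∧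
      (F.card : ℤ) = 2 * Fintype.card V - 3 ∧
      (∀ I ⊆ F, I.Nonempty → (I.card : ℤ) ≤ 2 * (VF I).card - 3)) :
    (∀ F ⊆ G.edgeFinset,
        (∀ I ⊆ F, I.Nonempty →
          (I.card : ℤ) ≤ minDilworth (countFn 2 3) I + minDilworth (countFn 1 0) I - 1) →
        (F.card : ℤ) ≤ 3 * Fintype.card V - 5) ∧
    (∃ F ⊆ G.edgeFinset,
        (∀ I ⊆ F, I.Nonempty → (I.card : ℤ) ≤ 3 * (VF I).card - 4) ∧
        (F.card : ℤ) = 3 * Fintype.card V - 4) ∧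
    (3 * (Fintype.card V : ℤ) - 5 < 3 * Fintype.card V - 4) := by
  classical
  obtain ⟨hsp, hcard, hV⟩ := htight
  have hn2 : 2 ≤ (Fintype.card V : ℤ) := by
    have h0 : (0 : ℤ) ≤ G.edgeFinset.card := Nat.cast_nonneg _
    omega
  refine ⟨?_, ⟨G.edgeFinset, Finset.Subset.refl _, hsp, hcard⟩, by omega⟩
  intro F hFE hFind
  by_contra hgt
  push_neg at hgt
  have hFcard : G.edgeFinset.card ≤ F.card := by
    have : (G.edgeFinset.card : ℤ) ≤ F.card := by omega
    exact_mod_cast this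
  have hFeq : F = G.edgeFinset := Finset.eq_of_subset_of_card_le hFE hFcard
  have hEne : G.edgeFinset.Nonempty := by
    rw [← Finset.card_pos]
    have : (0 : ℤ) < G.edgeFinset.card := by omega
    exact_mod_cast this
  have hmain := hFind G.edgeFinset (hFeq ▸ Finset.Subset.refl G.edgeFinset) hEne
  -- the bicircular truncation is at most n
  have h10 : minDilworth (countFn 1 0) G.edgeFinset ≤ (Fintype.card V : ℤ) := by
    have hp : IsPartitionOf ({G.edgeFinset} : Finset (Finset (Sym2 V)))
        (G.edgeFinset \ ∅) := by
      refine ⟨?_, ?_, ?_⟩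
      · intro S hS
        rw [Finset.mem_singleton] at hS
        subst hS
        exact hEne
      · intro S hS T hT hne
        rw [Finset.mem_singleton] at hS hT
        exact absurd (hS.trans hT.symm) hne
      · rw [Finset.sdiff_empty]
        exact Finset.sup_singleton
    have hle := minDilworth_le (f := countFn 1 0)
      (fun S _ _ => by unfold countFn; omega)
      (Finset.empty_subset G.edgeFinset) hp
    have hval : ((∅ : Finset (Sym2 V)).card : ℤ) +
        ∑ S ∈ ({G.edgeFinset} : Finset (Finset (Sym2 V))), countFn 1 0 S
        = (Fintype.card V : ℤ) := by
      rw [Finset.sum_singleton]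
      unfold countFn
      rw [hV, Finset.card_univ]
      simp
    rw [hval] at hle
    exact hle
  obtain ⟨I, hIE, hIsp, hIle⟩ := exists_sparse_ge G
  have hIlow : 2 * (Fintype.card V : ℤ) - 3 ≤ I.card := by linarith
  have hIne : I.Nonempty := by
    rw [← Finset.card_pos]
    have : (0 : ℤ) < I.card := by omega
    exact_mod_cast this
  have hIup : (I.card : ℤ) ≤ 2 * (VF I).card - 3 := by
    have := hIsp I (Finset.Subset.refl I) hIne
    unfold countFn at this
    omega
  have hVFle : (VF I).card ≤ Fintype.card V := Finset.card_le_univ (VF I)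
  have hVFeq : (VF I).card = Fintype.card V := by
    have : (Fintype.card V : ℤ) ≤ (VF I).card := by omega
    have := (by exact_mod_cast this : Fintype.card V ≤ (VF I).card)
    omega
  have hVFI : VF I = Finset.univ := (Finset.card_eq_iff_eq_univ _).1 hVFeq
  have hIcard : (I.card : ℤ) = 2 * Fintype.card V - 3 := by
    rw [hVFeq] at hIup
    omega
  exact hnospanning ⟨I, hIE, hVFI, hIcard, fun J hJ hne => by
    have := hIsp J hJ hne
    unfold countFn at this
    exact this⟩
end

section
/- Let E = S_3, the set of the six permutations of {1,2,3}, and for i ∈ {1,2,3} define r_i : 2^E → ℤ by r_i(F) = |{ j ∈ {1,2,3} : σ(i) = j for some σ ∈ F }| (the rank function of the partition matroid on E whose classes are {σ : σ(i) = j} for j = 1,2,3). Then for every permutation τ of {1,2,3}, the full set E is independent in the matroid induced by (r_{τ(1)} + r_{τ(2)} − 1)^MD + r_{τ(3)} − 1; that is, |I| ≤ (r_{τ(1)} + r_{τ(2)} − 1)^MD(I) + r_{τ(3)}(I) − 1 for every nonempty I ⊆ E. (Combined with the fact that the corresponding incidence matrix has rank at most 5 < 6 = |E|, this disproves Bernstein's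 conjecture and its strengthening (inequality (7) of the paper) for three linear spaces.) -/
/-- The rank function of the partition matroid on `S₃` whose classes are
`{σ : σ(i) = j}`, `j = 1,2,3`: `rᵢ(F) = |{j : σ(i) = j for some σ ∈ F}|`. -/
def partRank (i : Fin 3) (F : Finset (Equiv.Perm (Fin 3))) : ℤ :=
  (F.image fun σ => σ i).card

set_option maxHeartbeats 1000000 in
lemma key : ∀ (a b : Fin 3), a ≠ b → ∀ S : Finset (Equiv.Perm (Fin 3)), S.Nonempty →
    (S.card : ℤ) ≤ partRank a S + partRank b S - 1 + (if S = Finset.univ then 1 else 0) := by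
  decide

lemma rank_univ : ∀ c : Fin 3, partRank c Finset.univ = 3 := by decide

lemma partRank_pos (c : Fin 3) {I : Finset (Equiv.Perm (Fin 3))} (hI : I.Nonempty) :
    1 ≤ partRank c I := by
  have : (I.image fun σ => σ c).Nonempty := hI.image _
  have := Finset.card_pos.mpr this
  unfold partRank
  exact_mod_cast this

/-- For every permutation `τ` of `{1,2,3}`, the whole set `E = S₃`
is independent in the matroid induced by `(r_{τ(1)} + r_{τ(2)} − 1)^MD + r_{τ(3)} − 1`:
every nonempty `I ⊆ E` satisfies
`|I| ≤ (r_{τ(1)} + r_{τ(2)} − 1)^MD(I) + r_{τ(3)}(I) − 1`. -/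
theorem stmt14 (τ : Equiv.Perm (Fin 3)) :
    ∀ I : Finset (Equiv.Perm (Fin 3)), I.Nonempty →
      (I.card : ℤ) ≤
        minDilworth (fun F => partRank (τ 0) F + partRank (τ 1) F - 1) I
          + partRank (τ 2) I - 1 := by
  intro I hI
  have hab : τ 0 ≠ τ 1 := fun h => absurd (τ.injective h) (by decide)
  have hmain : (I.card : ℤ) - partRank (τ 2) I + 1 ≤
      minDilworth (fun F => partRank (τ 0) F + partRank (τ 1) F - 1) I := by
    apply le_csInf
    · refine ⟨(I.card : ℤ), I, subset_rfl, ∅, ⟨?_, ?_, ?_⟩, by simp⟩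
      · intro S hS; exact absurd hS (Finset.notMem_empty S)
      · intro S hS; exact absurd hS (Finset.notMem_empty S)
      · simp
    · rintro s ⟨F₀, hF₀, P, ⟨hne, hdisj, hsup⟩, rfl⟩
      -- I \ F₀ is the disjoint union of the parts
      have hbU : I \ F₀ = P.biUnion id := by
        rw [← hsup, Finset.sup_eq_biUnion]
      have hcard_sdiff : (I \ F₀).card = ∑ S ∈ P, S.card := by
        rw [hbU]
        exact Finset.card_biUnion hdisj
      have hcardI : I.card = F₀.card + ∑ S ∈ P, S.card := by
        rw [← hcard_sdiff, ← Finset.card_sdiff_add_card_eq_card hF₀, Nat.add_comm]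
      -- sum of indicators ≤ partRank (τ 2) I - 1
      have hind : (∑ S ∈ P, (if S = Finset.univ then (1:ℤ) else 0)) ≤ partRank (τ 2) I - 1 := by
        rw [Finset.sum_ite_eq' P Finset.univ (fun _ => (1:ℤ))]
        by_cases h : (Finset.univ : Finset (Equiv.Perm (Fin 3))) ∈ P
        · have hIuniv : I = Finset.univ := by
            rw [← Finset.univ_subset_iff]
            have h1 := Finset.le_sup (f := id) h
            rw [hsup] at h1
            exact subset_trans h1 (Finset.sdiff_subset)
          rw [hIuniv, rank_univ]
          split_ifs <;> norm_num
        · simp only [h, if_false]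
          have := partRank_pos (τ 2) hI
          omega
      have hkey : ∀ S ∈ P, (S.card : ℤ) ≤
          partRank (τ 0) S + partRank (τ 1) S - 1 + (if S = Finset.univ then 1 else 0) :=
        fun S hS => key (τ 0) (τ 1) hab S (hne S hS)
      have hsum : (∑ S ∈ P, (S.card : ℤ)) ≤
          (∑ S ∈ P, (partRank (τ 0) S + partRank (τ 1) S - 1)) +
            ∑ S ∈ P, (if S = Finset.univ then (1:ℤ) else 0) := by
        rw [← Finset.sum_add_distrib]
        exact Finset.sum_le_sum hkey
      have hcast : (I.card : ℤ) = (F₀.card : ℤ) + ∑ S ∈ P, (S.card : ℤ) := by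
        rw [hcardI]; push_cast; ring
      rw [hcast]
      have := le_trans hsum (by linarith : (∑ S ∈ P, (partRank (τ 0) S + partRank (τ 1) S - 1)) +
            (∑ S ∈ P, (if S = Finset.univ then (1:ℤ) else 0)) ≤
          (∑ S ∈ P, (partRank (τ 0) S + partRank (τ 1) S - 1)) + (partRank (τ 2) I - 1))
      linarith
  linarith
end

section
/- Let d ≥ 1 and let n_1, …, n_d, m be positive integers with n_i ≤ m for each i. Then there exists a nonempty Zariski-open subset U of ∏_{i=1}^d ℂ^{m×n_i} × ∏_{i=1}^d ℂ^{n_i} such that for every tuple (Y_1, …, Y_d, p_1, …, p_d) ∈ U and every nonempty F ⊆ [m], the rank of the submatrix, with rows indexed by F, of the block matrix ( (∏_{i≠1} Diag(Y_i p_i)) Y_1 | ⋯ | (∏_{i≠d} Diag(Y_i p_i)) Y_d ) equals min{|F|, n_1 + ⋯ + n_d − (d−1)}. (Equivalently, the algebraic matroid of the Hadamard product of generic linear spaces of dimensions n_1, …, n_d in ℂ^m is the uniform matroid on [m] of rank min{m, n_1 + ⋯ + n_d − (d−1)}.) -/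
/-!
Write `J` for the Jacobian and `q = ∏ₖ Yₖ pₖ`. Each block of `J` satisfies Euler's relation
`(∏_{k≠i} Diag(Yₖ pₖ)) Yᵢ pᵢ = q`, so `J` maps `(t₁p₁, …, t_d p_d)` to `(∑ tᵢ) q`. When all
`pᵢ ≠ 0` this gives `d - 1` independent kernel vectors, whence `rank J ≤ ∑ nᵢ - (d - 1)`.

Conversely, every minor of `J` is a polynomial in the entries of `(Y, p)`. At `pᵢ = e₀` and
`(Yᵢ)_{r,a} = x_r ^ e(i,a)`, where `e(i,0) = 0` and the other exponents are distinct and positive,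
each `Yᵢ pᵢ` is the all-ones vector and `J` becomes the generalized Vandermonde matrix
`(x_r ^ e(c))`. Its columns with pairwise distinct exponents, `(i,a)` with `a ≠ 0` together with
one column `(i₀,0)`, number `∑ nᵢ - (d - 1)`, so for every `F` some minor of the required size is
a nonzero polynomial. The polynomial `P` is the product of these minors over all `F`, times
`∏ᵢ (pᵢ)₀` to keep every `pᵢ` nonzero.
-/

/-- The rank of the submatrix of `Y` consisting of the rows indexed by `F`. -/
noncomputable def rowsRank {m : ℕ} {o : Type*} [Fintype o]
    (Y : Matrix (Fin m) o ℂ) (F : Finset (Fin m)) : ℕ :=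
  (Y.submatrix (fun x : {a // a ∈ F} => (x : Fin m)) id).rank

open MvPolynomial Module Matrix

theorem Matrix.card_le_rank_of_det_submatrix_ne_zero {K ι κ μ : Type*} [Field K] [Fintype κ]
    [Fintype μ] [DecidableEq μ] (A : Matrix ι κ K) (f : μ → ι) (g : μ → κ)
    (h : (A.submatrix f g).det ≠ 0) : Fintype.card μ ≤ A.rank :=
  (rank_of_det_ne_zero h).symm.le.trans (A.rank_submatrix_le f g)

theorem LinearMap.finrank_range_add_finrank_le_of_injective {K U V W : Type*} [Field K]
    [AddCommGroup U] [Module K U] [AddCommGroup V] [Module K V] [AddCommGroup W] [Module K W]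
    [FiniteDimensional K U] [FiniteDimensional K V] (f : V →ₗ[K] W) {g : U →ₗ[K] V}
    (hg : Function.Injective g) :
    finrank K (range f) + finrank K U ≤ finrank K V + finrank K (range (f ∘ₗ g)) := by
  have hker : finrank K (ker (f ∘ₗ g)) ≤ finrank K (ker f) := by
    rw [LinearEquiv.finrank_eq (Submodule.equivMapOfInjective g hg _)]
    exact Submodule.finrank_mono (Submodule.map_le_iff_le_comap.mpr fun x hx => hx)
  have := f.finrank_range_add_finrank_ker
  have := (f ∘ₗ g).finrank_range_add_finrank_ker
  omega

theorem Matrix.rank_add_card_le_of_injective_mulVec {K l m n : Type*} [Field K] [Fintype m]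
    [Fintype n] (A : Matrix l m K) {B : Matrix m n K} (hB : Function.Injective B.mulVec) :
    A.rank + Fintype.card n ≤ Fintype.card m + (A * B).rank := by
  have := A.mulVecLin.finrank_range_add_finrank_le_of_injective (g := B.mulVecLin) hB
  rwa [← mulVecLin_mul, finrank_fintype_fun_eq_card, finrank_fintype_fun_eq_card] at this

theorem MvPolynomial.det_X_pow_ne_zero {R σ ι : Type*} [CommRing R] [Nontrivial R] [Fintype ι]
    [DecidableEq ι] {f : ι → σ} (hf : Function.Injective f) {e : ι → ℕ}
    (he : Function.Injective e) :
    (Matrix.of fun j c => (X (f j) : MvPolynomial σ R) ^ e c).det ≠ 0 := by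
  classical
  let w : Equiv.Perm ι → σ →₀ ℕ := fun τ => ∑ i, Finsupp.single (f (τ i)) (e i)
  have hw : ∀ τ j, w τ (f j) = e (τ⁻¹ j) := by
    intro τ j
    simp only [w, Finsupp.finsetSum_apply, Finsupp.single_apply, hf.eq_iff]
    rw [Finset.sum_eq_single (τ⁻¹ j)] <;> aesop
  have hw_inj : Function.Injective w := fun τ τ' h =>
    inv_injective <| Equiv.ext fun j => he (by rw [← hw, ← hw, h])
  have hdet : (Matrix.of fun j c => (X (f j) : MvPolynomial σ R) ^ e c).det =
      ∑ τ : Equiv.Perm ι, Equiv.Perm.sign τ • monomial (w τ) (1 : R) := by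
    simp [Matrix.det_apply, w, monomial_sum_index, X_pow_eq_monomial]
  intro h
  have := congrArg (coeff (w 1)) hdet
  rw [h, coeff_sum, Finset.sum_eq_single 1] at this
  · simp at this
  · intro τ _ hτ
    rw [coeff_smul, coeff_monomial, if_neg (hw_inj.ne hτ), smul_zero]
  · simp

section HadamardJacobian

variable {ι : Type*} {d : ℕ} {n : Fin d → ℕ}

def hadamardJacobian {R : Type*} [CommRing R] (Y : ∀ i, Matrix ι (Fin (n i)) R)
    (p : ∀ i, Fin (n i) → R) : Matrix ι (Σ i, Fin (n i)) R :=
  Matrix.of fun r c => (∏ k ∈ Finset.univ.erase c.1, (Y k *ᵥ p k) r) * Y c.1 r c.2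

theorem hadamardJacobian_map {R S : Type*} [CommRing R] [CommRing S] (φ : R →+* S)
    (Y : ∀ i, Matrix ι (Fin (n i)) R) (p : ∀ i, Fin (n i) → R) :
    (hadamardJacobian Y p).map φ = hadamardJacobian (fun i => (Y i).map φ) (fun i => φ ∘ p i) := by
  ext r c
  simp [hadamardJacobian, RingHom.map_mulVec]

theorem hadamardJacobian_eq_of_mulVec_eq_one {R : Type*} [CommRing R]
    {Y : ∀ i, Matrix ι (Fin (n i)) R} {p : ∀ i, Fin (n i) → R} (h : ∀ k, Y k *ᵥ p k = 1) :
    hadamardJacobian Y p = Matrix.of fun r c => Y c.1 r c.2 := by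
  ext r c
  simp [hadamardJacobian, h]

theorem hadamardJacobian_mul_blockDiagonal' {R : Type*} [CommRing R]
    (Y : ∀ i, Matrix ι (Fin (n i)) R) (p : ∀ i, Fin (n i) → R) :
    hadamardJacobian Y p * blockDiagonal' (fun i => replicateCol Unit (p i)) =
      vecMulVec (fun r => ∏ k, (Y k *ᵥ p k) r) 1 := by
  ext r ⟨i, u⟩
  simp only [hadamardJacobian, mul_apply, blockDiagonal'_apply, vecMulVec_apply,
    Fintype.sum_sigma]
  rw [Finset.sum_eq_single i (fun j _ hj => by simp [hj]) (by simp)]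
  simp [mul_assoc, ← Finset.mul_sum, mulVec, dotProduct, Finset.prod_erase_mul]

theorem injective_mulVec_blockDiagonal' {K : Type*} [Field K] {p : ∀ i, Fin (n i) → K}
    (hp : ∀ i, p i ≠ 0) :
    Function.Injective (blockDiagonal' fun i => replicateCol Unit (p i)).mulVec := by
  intro t t' h
  funext ⟨i, ⟨⟩⟩
  obtain ⟨a, ha⟩ : ∃ a, p i a ≠ 0 := Function.ne_iff.mp (hp i)
  have := congrFun h ⟨i, a⟩
  simpa [mulVec, dotProduct, blockDiagonal'_apply, Fintype.sum_sigma, ha] using this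

theorem rank_hadamardJacobian_le {K : Type*} [Field K] {Y : ∀ i, Matrix ι (Fin (n i)) K}
    {p : ∀ i, Fin (n i) → K} (hp : ∀ i, p i ≠ 0) :
    (hadamardJacobian Y p).rank ≤ ∑ i, n i - (d - 1) := by
  have h := (hadamardJacobian Y p).rank_add_card_le_of_injective_mulVec
    (injective_mulVec_blockDiagonal' hp)
  rw [hadamardJacobian_mul_blockDiagonal'] at h
  have h₁ := rank_vecMulVec_le (fun r => ∏ k, (Y k *ᵥ p k) r) (1 : (Σ _ : Fin d, Unit) → K)
  have h₂ := (hadamardJacobian Y p).rank_le_card_width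
  simp only [Fintype.card_sigma, Fintype.card_fin, Fintype.card_unit, Finset.sum_const,
    Finset.card_univ, smul_eq_mul, mul_one] at h h₂
  omega

end HadamardJacobian

section GenericHadamardJacobian

variable {d m : ℕ} {n : Fin d → ℕ}

abbrev HadamardVar (m : ℕ) (n : Fin d → ℕ) : Type :=
  (Σ i, Fin m × Fin (n i)) ⊕ (Σ i, Fin (n i))

def hadamardPoint {R : Type*} (Y : ∀ i, Matrix (Fin m) (Fin (n i)) R) (p : ∀ i, Fin (n i) → R) :
    HadamardVar m n → R :=
  Sum.elim (fun x => Y x.1 x.2.1 x.2.2) (fun x => p x.1 x.2)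

variable (m n) in
noncomputable def genericHadamardJacobian (R : Type*) [CommRing R] :
    Matrix (Fin m) (Σ i, Fin (n i)) (MvPolynomial (HadamardVar m n) R) :=
  hadamardJacobian (fun i => Matrix.of fun r a => X (Sum.inl ⟨i, (r, a)⟩))
    (fun i a => X (Sum.inr ⟨i, a⟩))

theorem genericHadamardJacobian_map_eval {R : Type*} [CommRing R]
    (Y : ∀ i, Matrix (Fin m) (Fin (n i)) R) (p : ∀ i, Fin (n i) → R) :
    (genericHadamardJacobian m n R).map (eval (hadamardPoint Y p)) = hadamardJacobian Y p := by
  rw [genericHadamardJacobian, hadamardJacobian_map]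
  congr <;> ext <;> simp [hadamardPoint]

def vandermondeExponent (n : Fin d → ℕ) (c : Σ i, Fin (n i)) : ℕ :=
  if (c.2 : ℕ) = 0 then 0 else finSigmaFinEquiv c + 1

def vandermondeColumns (n : Fin d → ℕ) (i₀ : Fin d) : Finset (Σ i, Fin (n i)) :=
  Finset.univ.filter fun c => (c.2 : ℕ) ≠ 0 ∨ c.1 = i₀

theorem injOn_vandermondeExponent (i₀ : Fin d) :
    Set.InjOn (vandermondeExponent n) (vandermondeColumns n i₀) := by
  rintro c hc c' hc' h
  simp only [vandermondeColumns, Finset.coe_filter, Finset.mem_univ, true_and,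
    Set.mem_ofPred_eq] at hc hc'
  unfold vandermondeExponent at h
  split_ifs at h with h₀ h₀'
  · have h₁ : c.1 = c'.1 := (hc.resolve_left (not_not.mpr h₀)).trans
      (hc'.resolve_left (not_not.mpr h₀')).symm
    exact Sigma.ext h₁ ((Fin.heq_ext_iff (congrArg n h₁)).mpr (h₀.trans h₀'.symm))
  · exact finSigmaFinEquiv.injective (Fin.ext (by omega))

theorem sum_sub_le_card_vandermondeColumns (hn : ∀ i, 0 < n i) (i₀ : Fin d) :
    ∑ i, n i - (d - 1) ≤ (vandermondeColumns n i₀).card := by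
  have hsplit := Finset.card_filter_add_card_filter_not (s := Finset.univ)
    (fun c : Σ i, Fin (n i) => (c.2 : ℕ) ≠ 0 ∨ c.1 = i₀)
  have hrest : (Finset.univ.filter fun c : Σ i, Fin (n i) => ¬((c.2 : ℕ) ≠ 0 ∨ c.1 = i₀)) ⊆
      (Finset.univ.erase i₀).image fun i => ⟨i, ⟨0, hn i⟩⟩ := by
    rintro ⟨i, a⟩ hc
    simp only [Finset.mem_filter, Finset.mem_univ, true_and, not_or, not_not] at hc
    exact Finset.mem_image.mpr ⟨i, by simp [hc.2], by rw [show a = ⟨0, hn i⟩ from Fin.ext hc.1]⟩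
  have := (Finset.card_le_card hrest).trans Finset.card_image_le
  simp only [Finset.card_univ, Fintype.card_sigma, Fintype.card_fin,
    Finset.card_erase_of_mem (Finset.mem_univ i₀)] at hsplit this
  rw [vandermondeColumns]
  omega

noncomputable def vandermondePoint (R : Type*) [CommRing R] :
    HadamardVar m n → MvPolynomial (Fin m) R :=
  Sum.elim (fun x => X x.2.1 ^ vandermondeExponent n ⟨x.1, x.2.2⟩)
    (fun x => if (x.2 : ℕ) = 0 then 1 else 0)

theorem genericHadamardJacobian_map_aeval_vandermondePoint (R : Type*) [CommRing R]
    (hn : ∀ i, 0 < n i) :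
    (genericHadamardJacobian m n R).map (aeval (vandermondePoint R)) =
      Matrix.of fun r c => X r ^ vandermondeExponent n c := by
  rw [← AlgHom.coe_toRingHom, genericHadamardJacobian, hadamardJacobian_map,
    hadamardJacobian_eq_of_mulVec_eq_one]
  · ext r c
    simp [vandermondePoint]
  · intro k
    funext r
    simp only [mulVec, dotProduct]
    rw [Finset.sum_eq_single ⟨0, hn k⟩]
    · simp [vandermondePoint, vandermondeExponent]
    · intro a _ ha
      simp [vandermondePoint, Fin.ext_iff.not.mp ha]
    · simp

theorem exists_ne_zero_min_le_rowsRank_hadamardJacobian (hn : ∀ i, 0 < n i) (i₀ : Fin d)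
    (F : Finset (Fin m)) :
    ∃ Q : MvPolynomial (HadamardVar m n) ℂ, Q ≠ 0 ∧
      ∀ (Y : ∀ i, Matrix (Fin m) (Fin (n i)) ℂ) (p : ∀ i, Fin (n i) → ℂ),
        eval (hadamardPoint Y p) Q ≠ 0 →
          min F.card (∑ i, n i - (d - 1)) ≤ rowsRank (hadamardJacobian Y p) F := by
  classical
  set s := min F.card (∑ i, n i - (d - 1))
  obtain ⟨f⟩ : Nonempty (Fin s ↪ F) :=
    Function.Embedding.nonempty_of_card_le (by simp [s])
  obtain ⟨g⟩ : Nonempty (Fin s ↪ vandermondeColumns n i₀) :=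
    Function.Embedding.nonempty_of_card_le <| by
      rw [Fintype.card_fin, Fintype.card_coe]
      exact (min_le_right _ _).trans (sum_sub_le_card_vandermondeColumns hn _)
  let cols : Fin s → Σ i, Fin (n i) := fun j => g j
  refine ⟨((genericHadamardJacobian m n ℂ).submatrix (fun j => f j) cols).det, ?_,
    fun Y p hQ => ?_⟩
  · have hspec : aeval (vandermondePoint ℂ)
        ((genericHadamardJacobian m n ℂ).submatrix (fun j => f j) cols).det =
        (Matrix.of fun j c => X (f j : Fin m) ^ vandermondeExponent n (cols c)).det := by
      rw [AlgHom.map_det, AlgHom.mapMatrix_apply, ← submatrix_map,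
        genericHadamardJacobian_map_aeval_vandermondePoint ℂ hn]
      rfl
    have hcols : Function.Injective fun c => vandermondeExponent n (cols c) := fun a b h =>
      g.injective (Subtype.val_injective (injOn_vandermondeExponent _ (g a).2 (g b).2 h))
    intro h0
    exact det_X_pow_ne_zero (f := fun j => (f j : Fin m))
      (Subtype.val_injective.comp f.injective) hcols (by rw [← hspec, h0, map_zero])
  · rw [RingHom.map_det, RingHom.mapMatrix_apply, ← submatrix_map,
      genericHadamardJacobian_map_eval] at hQ
    simpa [rowsRank] using card_le_rank_of_det_submatrix_ne_zero
      ((hadamardJacobian Y p).submatrix Subtype.val id) f cols hQ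

end GenericHadamardJacobian

theorem stmt15_general {d m : ℕ} (hd : 0 < d) (n : Fin d → ℕ)
    (hn : ∀ i, 0 < n i) :
    ∃ P : MvPolynomial ((Σ i : Fin d, Fin m × Fin (n i)) ⊕ (Σ i : Fin d, Fin (n i))) ℂ,
      P ≠ 0 ∧
      ∀ (Y : ∀ i : Fin d, Matrix (Fin m) (Fin (n i)) ℂ) (p : ∀ i : Fin d, Fin (n i) → ℂ),
        MvPolynomial.eval
            (Sum.elim (fun x => Y x.1 x.2.1 x.2.2) (fun x => p x.1 x.2)) P ≠ 0 →
        ∀ F : Finset (Fin m), F.Nonempty →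
          rowsRank (Matrix.of fun (r : Fin m) (c : Σ i : Fin d, Fin (n i)) =>
              (∏ k ∈ Finset.univ.erase c.1, (Y k).mulVec (p k) r) * Y c.1 r c.2) F =
            min F.card (∑ i, n i - (d - 1)) := by
  classical
  choose Q hQ hQ_rank using
    fun F : Finset (Fin m) => exists_ne_zero_min_le_rowsRank_hadamardJacobian hn ⟨0, hd⟩ F
  refine ⟨(∏ F, Q F) * ∏ i, X (Sum.inr ⟨i, ⟨0, hn i⟩⟩),
    mul_ne_zero (Finset.prod_ne_zero_iff.mpr fun F _ => hQ F)
      (Finset.prod_ne_zero_iff.mpr fun i _ => X_ne_zero _), fun Y p hP F _ => ?_⟩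
  change rowsRank (hadamardJacobian Y p) F = _
  simp only [map_mul, map_prod, mul_ne_zero_iff, Finset.prod_ne_zero_iff, Finset.mem_univ,
    forall_const, eval_X, Sum.elim_inr] at hP
  refine le_antisymm (le_min ?_ ?_) (hQ_rank F Y p (hP.1 F))
  · exact (rank_le_card_height _).trans (Fintype.card_coe F).le
  · exact (rank_submatrix_le _ _ _).trans
      (rank_hadamardJacobian_le fun i hi => hP.2 i (congrFun hi _))

/-- For positive integers `n₁,…,n_d ≤ m` there is a nonempty
Zariski-open subset `U` of `∏ᵢ ℂ^{m×nᵢ} × ∏ᵢ ℂ^{nᵢ}` (the complement of the zero set of a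
nonzero polynomial) such that for every `(Y₁,…,Y_d,p₁,…,p_d) ∈ U` and every nonempty
`F ⊆ [m]`, the rows indexed by `F` of the Jacobian
`((∏_{i≠1} Diag(Yᵢpᵢ))Y₁ | ⋯ | (∏_{i≠d} Diag(Yᵢpᵢ))Y_d)` have rank
`min {|F|, n₁ + ⋯ + n_d − (d−1)}`: the algebraic matroid of the Hadamard product of
generic linear spaces is uniform. -/
theorem stmt15 {d m : ℕ} (hd : 0 < d) (hm : 0 < m) (n : Fin d → ℕ)
    (hn : ∀ i, 0 < n i) (hnm : ∀ i, n i ≤ m) :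
    ∃ P : MvPolynomial ((Σ i : Fin d, Fin m × Fin (n i)) ⊕ (Σ i : Fin d, Fin (n i))) ℂ,
      P ≠ 0 ∧
      ∀ (Y : ∀ i : Fin d, Matrix (Fin m) (Fin (n i)) ℂ) (p : ∀ i : Fin d, Fin (n i) → ℂ),
        MvPolynomial.eval
            (Sum.elim (fun x => Y x.1 x.2.1 x.2.2) (fun x => p x.1 x.2)) P ≠ 0 →
        ∀ F : Finset (Fin m), F.Nonempty →
          rowsRank (Matrix.of fun (r : Fin m) (c : Σ i : Fin d, Fin (n i)) =>
              (∏ k ∈ Finset.univ.erase c.1, (Y k).mulVec (p k) r) * Y c.1 r c.2) F =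
            min F.card (∑ i, n i - (d - 1)) :=
  stmt15_general hd n hn
end

section
/- For any positive integers n_1, …, n_d, m with n_i ≤ m for each i ∈ [d], there exist matrices Y_1 ∈ ℂ^{m×n_1}, …, Y_d ∈ ℂ^{m×n_d} with rank Y_i = n_i for each i, such that: (1) each row of each matrix Y_i contains exactly one entry equal to 1 and all other entries of that row equal to 0; and (2) the m×(n_1+⋯+n_d) concatenated matrix ( Y_1 | Y_2 | ⋯ | Y_d ) has rank min{m, n_1 + ⋯ + n_d − (d−1)}. -/
namespace Stmt17Aux

variable {d m : ℕ}

def NN (d : ℕ) (n : Fin d → ℕ) (j : ℕ) : ℕ := if h : j < d then n ⟨j, h⟩ - 1 else 0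
def PP (d : ℕ) (n : Fin d → ℕ) (l : ℕ) : ℕ := ∑ j ∈ Finset.range l, NN d n j
def tt (d m : ℕ) (n : Fin d → ℕ) (i : Fin d) : ℕ := min (PP d n i) (m - (n i - 1))
def ff (d m : ℕ) (n : Fin d → ℕ) (i : Fin d) (r : ℕ) : ℕ :=
  if tt d m n i ≤ r ∧ r < tt d m n i + (n i - 1) then r - tt d m n i + 1 else 0

lemma PP_succ (n : Fin d → ℕ) (i : Fin d) :
    PP d n (i + 1) = PP d n i + (n i - 1) := by
  unfold PP
  rw [Finset.sum_range_succ]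
  congr 1
  simp [NN, i.isLt]

lemma PP_le (n : Fin d → ℕ) {a b : ℕ} (h : a ≤ b) : PP d n a ≤ PP d n b :=
  Finset.sum_le_sum_of_subset (Finset.range_subset_range.mpr h)

lemma tt_add (n : Fin d → ℕ) (hnm : ∀ i, n i ≤ m) (i : Fin d) :
    tt d m n i + (n i - 1) = min (PP d n (i + 1)) m := by
  have := hnm i
  rw [PP_succ]
  unfold tt
  omega

lemma tt_add_le_T (n : Fin d → ℕ) (hnm : ∀ i, n i ≤ m) (i : Fin d) :
    tt d m n i + (n i - 1) ≤ PP d n d := by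
  rw [tt_add n hnm i]
  exact le_trans (min_le_left _ _) (PP_le n i.isLt)

lemma tt_add_le_m (n : Fin d → ℕ) (hnm : ∀ i, n i ≤ m) (i : Fin d) :
    tt d m n i + (n i - 1) ≤ m := by
  rw [tt_add n hnm i]; exact min_le_right _ _

lemma ff_lt (n : Fin d → ℕ) (hn : ∀ i, 0 < n i) (i : Fin d) (r : ℕ) :
    ff d m n i r < n i := by
  have := hn i
  unfold ff
  split <;> omega

lemma cover (n : Fin d → ℕ) (hnm : ∀ i, n i ≤ m) :
    ∀ j < min (PP d n d) m, ∃ i : Fin d, tt d m n i ≤ j ∧ j < tt d m n i + (n i - 1) := by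
  suffices H : ∀ l ≤ d, ∀ j < min (PP d n l) m,
      ∃ i : Fin d, tt d m n i ≤ j ∧ j < tt d m n i + (n i - 1) by
    exact H d le_rfl
  intro l
  induction l with
  | zero => intro _ j hj; simp [PP] at hj
  | succ l ih =>
    intro hl j hj
    by_cases h : j < min (PP d n l) m
    · exact ih (by omega) j h
    · have hld : l < d := hl
      refine ⟨⟨l, hld⟩, ?_, ?_⟩
      · have h1 : tt d m n ⟨l, hld⟩ ≤ PP d n l := min_le_left _ _
        have h2 : tt d m n ⟨l, hld⟩ ≤ m - (n ⟨l, hld⟩ - 1) := min_le_right _ _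
        have := hnm ⟨l, hld⟩
        omega
      · rw [tt_add n hnm ⟨l, hld⟩]
        simpa using hj

lemma rank_sub_le {α β γ δ : Type*} [Fintype α] [Fintype β] [Fintype γ] [Fintype δ]
    [DecidableEq α] [DecidableEq β] (A : Matrix α β ℂ) (f : γ → α) (g : δ → β) :
    (A.submatrix f g).rank ≤ A.rank := by
  have hEq : A.submatrix f g =
      (Matrix.of fun (i : γ) (a : α) => if a = f i then (1:ℂ) else 0) * A *
      (Matrix.of fun (b : β) (j : δ) => if b = g j then (1:ℂ) else 0) := by
    ext i j
    simp [Matrix.mul_apply, ite_mul, mul_ite, Finset.sum_ite_eq, Finset.sum_ite_eq']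
  rw [hEq]
  exact le_trans (Matrix.rank_mul_le_left _ _) (Matrix.rank_mul_le_right _ _)

def Ymat (d m : ℕ) (n : Fin d → ℕ) (i : Fin d) : Matrix (Fin m) (Fin (n i)) ℂ :=
  Matrix.of fun r c => if (c : ℕ) = ff d m n i r then 1 else 0

lemma rank_Y (hm : 0 < m) (n : Fin d → ℕ) (hn : ∀ i, 0 < n i) (hnm : ∀ i, n i ≤ m)
    (i : Fin d) : (Ymat d m n i).rank = n i := by
  refine le_antisymm (by simpa using (Ymat d m n i).rank_le_card_width) ?_
  have hni := hn i
  have hnmi := hnm i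
  have hend := tt_add_le_m n hnm i
  set t := tt d m n i with ht
  have hval : ∀ c : Fin (n i), (if (c : ℕ) = 0 then (if t = 0 then n i - 1 else 0)
      else t + (c : ℕ) - 1) < m := by
    intro c
    have := c.isLt
    split_ifs <;> omega
  set h : Fin (n i) → Fin m := fun c => ⟨_, hval c⟩ with hh
  have hfh : ∀ c : Fin (n i), ff d m n i (h c) = (c : ℕ) := by
    intro c
    have hc := c.isLt
    simp only [hh, ff, ← ht]
    split_ifs <;> omega
  have hsub : (Ymat d m n i).submatrix h id = 1 := by
    ext c c'
    simp only [Matrix.submatrix_apply, Ymat, Matrix.of_apply, id_eq, hfh c, Matrix.one_apply]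
    by_cases hcc : c = c'
    · simp [hcc]
    · rw [if_neg (by simpa [Fin.val_eq_val] using fun hx => hcc (hx.symm)), if_neg hcc]
  have := rank_sub_le (Ymat d m n i) h id
  rw [hsub, Matrix.rank_one] at this
  simpa using this

end Stmt17Aux

namespace Stmt17Aux2
open Stmt17Aux

variable {d m : ℕ}

def Umat (d m : ℕ) (n : Fin d → ℕ) : Matrix (Fin m) (Fin (PP d n d + 1)) ℂ :=
  Matrix.of fun r j => if (j : ℕ) = PP d n d then 1 else if (r : ℕ) = (j : ℕ) then 1 else 0

def Vmat (d m : ℕ) (n : Fin d → ℕ) : Matrix (Fin (PP d n d + 1)) (Σ i : Fin d, Fin (n i)) ℂ :=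
  Matrix.of fun j c =>
    if (c.2 : ℕ) = 0 then
      (if (j : ℕ) = PP d n d then 1
       else if tt d m n c.1 ≤ (j : ℕ) ∧ (j : ℕ) < tt d m n c.1 + (n c.1 - 1) then -1 else 0)
    else (if (j : ℕ) = tt d m n c.1 + (c.2 : ℕ) - 1 then 1 else 0)

lemma M_eq (n : Fin d → ℕ) (hnm : ∀ i, n i ≤ m) :
    (Matrix.of fun (r : Fin m) (c : Σ i : Fin d, Fin (n i)) => Ymat d m n c.1 r c.2) =
      Umat d m n * Vmat d m n := by
  ext r ⟨i, c⟩
  rw [Matrix.mul_apply]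
  simp only [Matrix.of_apply, Ymat]
  have hend := tt_add_le_T n hnm i
  by_cases hc : (c : ℕ) = 0
  · rw [Fin.sum_univ_castSucc]
    have hlast : Umat d m n r (Fin.last _) * Vmat d m n (Fin.last _) ⟨i, c⟩ = 1 := by
      simp [Umat, Vmat, hc]
    rw [hlast]
    have hterm : ∀ j : Fin (PP d n d),
        Umat d m n r j.castSucc * Vmat d m n j.castSucc ⟨i, c⟩ =
        if (r : ℕ) = (j : ℕ) ∧ tt d m n i ≤ (j : ℕ) ∧ (j : ℕ) < tt d m n i + (n i - 1)
          then -1 else 0 := by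
      intro j
      have hjT : ¬ ((j.castSucc : ℕ) = PP d n d) := by
        have := j.isLt; simp only [Fin.coe_castSucc]; omega
      simp only [Umat, Vmat, Matrix.of_apply, if_pos hc, if_neg hjT, Fin.coe_castSucc]
      split_ifs <;> simp_all
    simp only [hterm]
    by_cases hrT : (r : ℕ) < PP d n d
    · rw [Finset.sum_eq_single (⟨(r : ℕ), hrT⟩ : Fin (PP d n d))]
      · simp only [ff, eq_self_iff_true, true_and]
        split_ifs <;> first | omega | norm_num
      · intro j _ hj
        have : (r : ℕ) ≠ (j : ℕ) := by
          intro h; exact hj (Fin.ext (by simp [← h]))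
        simp [this]
      · intro h; exact absurd (Finset.mem_univ _) h
    · rw [Finset.sum_eq_zero (fun j _ => by
        have := j.isLt
        have : ¬ ((r : ℕ) = (j : ℕ)) := by omega
        simp [this])]
      have : ff d m n i r = 0 := by
        unfold ff; split_ifs <;> omega
      simp [this, hc]
  · have h1 : 1 ≤ (c : ℕ) := Nat.one_le_iff_ne_zero.mpr hc
    have hcI := c.isLt
    have hj0lt : tt d m n i + (c : ℕ) - 1 < PP d n d + 1 := by omega
    rw [Finset.sum_eq_single (⟨tt d m n i + (c : ℕ) - 1, hj0lt⟩ : Fin (PP d n d + 1))]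
    · have hne : ¬ ((tt d m n i + (c : ℕ) - 1 : ℕ) = PP d n d) := by omega
      simp only [Umat, Vmat, Matrix.of_apply, if_neg hc, if_neg hne, if_pos rfl, mul_one]
      have hiff : ((c : ℕ) = ff d m n i r) ↔ ((r : ℕ) = tt d m n i + (c : ℕ) - 1) := by
        unfold ff; split_ifs <;> omega
      simp [hiff]
    · intro j _ hj
      have : ¬ ((j : ℕ) = tt d m n i + (c : ℕ) - 1) := by
        intro h; exact hj (Fin.ext (by simp [h]))
      simp [Vmat, hc, this]
    · intro h; exact absurd (Finset.mem_univ _) h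

end Stmt17Aux2

open Stmt17Aux Stmt17Aux2 in
/-- For any positive integers `n₁,…,n_d ≤ m` there exist matrices
`Yᵢ ∈ ℂ^{m×nᵢ}` of rank `nᵢ` such that each row of each `Yᵢ` has exactly one entry `1` and
all other entries `0`, and the concatenation `(Y₁ | ⋯ | Y_d)` has rank
`min {m, n₁ + ⋯ + n_d − (d−1)}`. -/
theorem stmt17 {d m : ℕ} (hd : 0 < d) (hm : 0 < m) (n : Fin d → ℕ)
    (hn : ∀ i, 0 < n i) (hnm : ∀ i, n i ≤ m) :
    ∃ Y : ∀ i : Fin d, Matrix (Fin m) (Fin (n i)) ℂ,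
      (∀ i, (Y i).rank = n i) ∧
      (∀ i, ∀ r : Fin m, ∃ c : Fin (n i), Y i r c = 1 ∧ ∀ c' ≠ c, Y i r c' = 0) ∧
      (Matrix.of fun (r : Fin m) (c : Σ i : Fin d, Fin (n i)) => Y c.1 r c.2).rank =
        min m (∑ i, n i - (d - 1)) := by
  classical
  refine ⟨fun i => Ymat d m n i, fun i => rank_Y hm n hn hnm i, ?_, ?_⟩
  · intro i r
    refine ⟨⟨ff d m n i r, ff_lt n hn i r⟩, by simp [Ymat], ?_⟩
    intro c' hc'
    simp only [Ymat, Matrix.of_apply]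
    rw [if_neg]
    intro h
    exact hc' (Fin.ext h)
  · show (Matrix.of fun (r : Fin m) (c : Σ i : Fin d, Fin (n i)) =>
      Ymat d m n c.1 r c.2).rank = min m (∑ i, n i - (d - 1))
    have hsum : ∑ i, n i - (d - 1) = PP d n d + 1 := by
      have h1 : PP d n d = ∑ i : Fin d, (n i - 1) := by
        unfold PP
        rw [← Fin.sum_univ_eq_sum_range (fun j => NN d n j) d]
        exact Finset.sum_congr rfl fun i _ => by simp [NN, i.isLt]
      have h2 : ∑ i, n i = (∑ i : Fin d, (n i - 1)) + d := by
        calc ∑ i, n i = ∑ i : Fin d, ((n i - 1) + 1) :=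
              Finset.sum_congr rfl fun i _ => by have := hn i; omega
          _ = (∑ i : Fin d, (n i - 1)) + ∑ _i : Fin d, 1 := Finset.sum_add_distrib
          _ = (∑ i : Fin d, (n i - 1)) + d := by simp
      omega
    rw [hsum]
    set M : Matrix (Fin m) (Σ i : Fin d, Fin (n i)) ℂ :=
      Matrix.of fun r c => Ymat d m n c.1 r c.2 with hM
    apply le_antisymm
    · apply le_min
      · simpa using M.rank_le_card_height
      · rw [hM, M_eq n hnm]
        refine le_trans (Matrix.rank_mul_le_left _ _) ?_
        simpa using (Umat d m n).rank_le_card_width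
    · set k := min m (PP d n d + 1) with hk
      have hkm : k ≤ m := min_le_left _ _
      have hkT : k ≤ PP d n d + 1 := min_le_right _ _
      have hcov : ∀ j : Fin k, (j : ℕ) < min (PP d n d) m →
          ∃ i : Fin d, tt d m n i ≤ (j : ℕ) ∧ (j : ℕ) < tt d m n i + (n i - 1) :=
        fun j hj => cover n hnm (j : ℕ) hj
      set g : Fin k → Σ i : Fin d, Fin (n i) := fun j =>
        if hj : (j : ℕ) < min (PP d n d) m then
          ⟨(hcov j hj).choose, ⟨(j : ℕ) - tt d m n (hcov j hj).choose + 1, by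
            have := (hcov j hj).choose_spec; omega⟩⟩
        else ⟨⟨0, hd⟩, ⟨0, hn ⟨0, hd⟩⟩⟩ with hg
      set S : Matrix (Fin k) (Fin k) ℂ := M.submatrix (Fin.castLE hkm) g with hS
      have key : ∀ (jv : ℕ) (i0 : Fin d) (c0 : Fin (n i0)) (r : Fin m),
          tt d m n i0 ≤ jv → jv < tt d m n i0 + (n i0 - 1) →
          (c0 : ℕ) = jv - tt d m n i0 + 1 →
          Ymat d m n i0 r c0 = if (r : ℕ) = jv then 1 else 0 := by
        intro jv i0 c0 r ha hb hc
        simp only [Ymat, Matrix.of_apply]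
        have hiff : ((c0 : ℕ) = ff d m n i0 (r : ℕ)) ↔ ((r : ℕ) = jv) := by
          unfold ff
          split_ifs <;> omega
        simp only [hiff]
      have hS1 : ∀ j j' : Fin k, (j' : ℕ) < min (PP d n d) m →
          S j j' = if (j : ℕ) = (j' : ℕ) then 1 else 0 := by
        intro j j' hj'
        rw [hS, Matrix.submatrix_apply, hg]
        beta_reduce
        rw [dif_pos hj']
        obtain ⟨h1, h2⟩ := (hcov j' hj').choose_spec
        simp only [hM, Matrix.of_apply]
        exact key (j' : ℕ) _ _ (Fin.castLE hkm j) h1 h2 rfl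
      have hdiag : ∀ j : Fin k, S j j = 1 := by
        intro j
        by_cases hj : (j : ℕ) < min (PP d n d) m
        · rw [hS1 j j hj]; simp
        · have hjlt := j.isLt
          have hjT : (j : ℕ) = PP d n d := by omega
          rw [hS, Matrix.submatrix_apply, hg]
          beta_reduce
          rw [dif_neg hj]
          simp only [hM, Matrix.of_apply, Ymat]
          have hfz : ff d m n ⟨0, hd⟩ ((j : ℕ)) = 0 := by
            have hle := tt_add_le_T n hnm ⟨0, hd⟩
            unfold ff
            rw [if_neg (by omega)]
          simp [Fin.coe_castLE, hfz]
      have htri : S.BlockTriangular id := by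
        intro j j' hlt
        have hjlt := j.isLt
        have hlt' : (j' : ℕ) < (j : ℕ) := hlt
        rw [hS1 j j' (by omega), if_neg (by omega)]
      have hdet : S.det = 1 := by
        rw [Matrix.det_of_upperTriangular htri]
        exact Finset.prod_eq_one fun j _ => hdiag j
      have hunit : IsUnit S := (Matrix.isUnit_iff_isUnit_det S).mpr (by rw [hdet]; exact isUnit_one)
      have hrankS : S.rank = k := by
        rw [Matrix.rank_of_isUnit S hunit]; simp
      have hle := rank_sub_le M (Fin.castLE hkm) g
      rw [hS] at hrankS
      omega
end
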